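/- arXiv:1504.05924 — 10 statements merged into one kernel-verified Lean document; each statement's English description precedes it below -/
import Mathlib

section
/- Let L be a linear map on the trivial extension algebra A⋉X, written in components as L(a,x) = (L_A(a)+T(x), L_X(a)+S(x)) for linear maps L_A:A→A, T:X→A, L_X:A→X, S:X→X. Then L is a Lie derivation on A⋉X if and only if: (a) L_A is a Lie derivation on A and L_X:A→X is a Lie derivation (i.e. L_X([a,b]) = [L_X(a),b] + [a,L_X(b)] for all a,b∈A); (b) T([a,x]) = [a,T(x)] and [T(x),y] = [T(y),x] for all a∈A and x,y∈X; and (c) S([a,x]) = [L_A(a),x] + [a,S(x)] for all a∈A, x∈X. -/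
open TrivSqZeroExt MulOpposite

/-!
The Lie-derivation defect `D(u, v) = L⁅u, v⁆ - (⁅L u, v⁆ + ⁅u, L v⁆)` is additive and
antisymmetric, so it vanishes identically as soon as it vanishes on the pairs of generators
`(inl a, inl b)`, `(inl a, inr x)`, `(inr x, inr y)` of `A ⋉ X`. On each of these pairs the
`A`- and `X`-components of `D` are exactly the defects of the identities (a), (b) and (c).
-/

section LieDefect

variable {M F : Type*} [NonUnitalNonAssocRing M] [FunLike F M M]

def lieDefect (L : F) (u v : M) : M := L ⁅u, v⁆ - (⁅L u, v⁆ + ⁅u, L v⁆)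

theorem lieDefect_eq_zero_iff (L : F) (u v : M) :
    lieDefect L u v = 0 ↔ L ⁅u, v⁆ = ⁅L u, v⁆ + ⁅u, L v⁆ :=
  sub_eq_zero

variable [AddMonoidHomClass F M M]

theorem lieDefect_add_left (L : F) (u u' v : M) :
    lieDefect L (u + u') v = lieDefect L u v + lieDefect L u' v := by
  simp only [lieDefect, Ring.lie_def, add_mul, mul_add, map_add, map_sub]
  abel

theorem lieDefect_swap (L : F) (u v : M) : lieDefect L v u = -lieDefect L u v := by
  simp only [lieDefect, Ring.lie_def, map_sub]
  abel

end LieDefect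

namespace TrivSqZeroExt

theorem forall_eq_zero_iff_of_add_left_of_swap {A X N : Type*} [AddZeroClass A]
    [AddZeroClass X] [SubtractionCommMonoid N] (D : TrivSqZeroExt A X → TrivSqZeroExt A X → N)
    (hadd : ∀ u u' v, D (u + u') v = D u v + D u' v) (hswap : ∀ u v, D v u = -D u v) :
    (∀ u v, D u v = 0) ↔ (∀ a b, D (inl a) (inl b) = 0) ∧ (∀ a x, D (inl a) (inr x) = 0)
      ∧ ∀ x y, D (inr x) (inr y) = 0 := by
  refine ⟨fun h => ⟨fun _ _ => h _ _, fun _ _ => h _ _, fun _ _ => h _ _⟩, ?_⟩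
  rintro ⟨hll, hlr, hrr⟩ u v
  have hadd_right : ∀ u v v', D u (v + v') = D u v + D u v' := fun u v v' => by
    rw [hswap, hadd, hswap v, hswap v', neg_add]
  rw [← inl_fst_add_inr_snd_eq u, ← inl_fst_add_inr_snd_eq v, hadd, hadd_right, hadd_right,
    hswap (inl _) (inr _)]
  simp [hll, hlr, hrr]

theorem inl_add_inr_eq_zero_iff {A X : Type*} [AddZeroClass A] [AddZeroClass X] (a : A) (x : X) :
    (inl a + inr x : TrivSqZeroExt A X) = 0 ↔ a = 0 ∧ x = 0 := by
  simp [TrivSqZeroExt.ext_iff]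

theorem inr_eq_zero_iff {A X : Type*} [Zero A] [Zero X] (x : X) :
    (inr x : TrivSqZeroExt A X) = 0 ↔ x = 0 := by
  simp [TrivSqZeroExt.ext_iff]

section Components

variable {R A X : Type*} [Semiring R] [AddCommMonoid A] [AddCommMonoid X] [Module R A]
  [Module R X] {L : TrivSqZeroExt A X →ₗ[R] TrivSqZeroExt A X} {LA : A →ₗ[R] A}
  {T : X →ₗ[R] A} {LX : A →ₗ[R] X} {S : X →ₗ[R] X}

theorem apply_inl_of_components
    (hL : ∀ (a : A) (x : X), L (inl a + inr x) = inl (LA a + T x) + inr (LX a + S x)) (a : A) :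
    L (inl a) = inl (LA a) + inr (LX a) := by
  simpa using hL a 0

theorem apply_inr_of_components
    (hL : ∀ (a : A) (x : X), L (inl a + inr x) = inl (LA a + T x) + inr (LX a + S x)) (x : X) :
    L (inr x) = inl (T x) + inr (S x) := by
  simpa using hL 0 x

end Components

section Commutators

variable {A X : Type*} [Ring A] [AddCommGroup X] [Module A X] [Module Aᵐᵒᵖ X]

theorem inl_lie_inl (a b : A) :
    ⁅(inl a : TrivSqZeroExt A X), (inl b : TrivSqZeroExt A X)⁆ = inl ⁅a, b⁆ := by
  simp only [Ring.lie_def, inl_mul_inl, inl_sub]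

theorem inl_lie_inr (a : A) (x : X) :
    ⁅(inl a : TrivSqZeroExt A X), (inr x : TrivSqZeroExt A X)⁆ = inr (a • x - op a • x) := by
  simp only [Ring.lie_def, inl_mul_inr, inr_mul_inl, inr_sub]

theorem inr_lie_inr (x y : X) :
    ⁅(inr x : TrivSqZeroExt A X), (inr y : TrivSqZeroExt A X)⁆ = 0 := by
  simp only [Ring.lie_def, inr_mul_inr, sub_zero]

variable {R : Type*} [Semiring R] [Module R A] [Module R X]
  {L : TrivSqZeroExt A X →ₗ[R] TrivSqZeroExt A X} {LA : A →ₗ[R] A} {T : X →ₗ[R] A}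
  {LX : A →ₗ[R] X} {S : X →ₗ[R] X}

theorem lieDefect_inl_inl_of_components
    (hL : ∀ (a : A) (x : X), L (inl a + inr x) = inl (LA a + T x) + inr (LX a + S x)) (a b : A) :
    lieDefect L (inl a) (inl b) = inl (lieDefect LA a b)
      + inr (LX (a * b - b * a) - ((op b • LX a - b • LX a) + (a • LX b - op a • LX b))) := by
  rw [lieDefect, inl_lie_inl, apply_inl_of_components hL ⁅a, b⁆, apply_inl_of_components hL a,
    apply_inl_of_components hL b]
  ext <;> simp [lieDefect, Ring.lie_def]

theorem lieDefect_inl_inr_of_components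
    (hL : ∀ (a : A) (x : X), L (inl a + inr x) = inl (LA a + T x) + inr (LX a + S x))
    (a : A) (x : X) :
    lieDefect L (inl a) (inr x) = inl (T (a • x - op a • x) - (a * T x - T x * a))
      + inr (S (a • x - op a • x) - ((LA a • x - op (LA a) • x) + (a • S x - op a • S x))) := by
  rw [lieDefect, inl_lie_inr, apply_inl_of_components hL, apply_inr_of_components hL,
    apply_inr_of_components hL]
  ext <;> simp [Ring.lie_def]

theorem lieDefect_inr_inr_of_components
    (hL : ∀ (a : A) (x : X), L (inl a + inr x) = inl (LA a + T x) + inr (LX a + S x))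
    (x y : X) :
    lieDefect L (inr x) (inr y) = -inr ((T x • y - op (T x) • y) - (T y • x - op (T y) • x)) := by
  rw [lieDefect, inr_lie_inr, apply_inr_of_components hL x, apply_inr_of_components hL y]
  ext
  · simp [Ring.lie_def]
  · simp [Ring.lie_def]
    abel

end Commutators

end TrivSqZeroExt

theorem lieDerivation_trivialExtension_iff_general
    {R A X : Type*} [CommRing R] [Ring A] [Algebra R A]
    [AddCommGroup X] [Module R X] [Module A X] [Module Aᵐᵒᵖ X]
    (L : TrivSqZeroExt A X →ₗ[R] TrivSqZeroExt A X)
    (LA : A →ₗ[R] A) (T : X →ₗ[R] A) (LX : A →ₗ[R] X) (S : X →ₗ[R] X)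
    (hL : ∀ (a : A) (x : X), L (inl a + inr x) = inl (LA a + T x) + inr (LX a + S x)) :
    (∀ u v : TrivSqZeroExt A X,
        L (u * v - v * u) = (L u * v - v * L u) + (u * L v - L v * u))
      ↔ ((∀ a b : A, LA (a * b - b * a) = (LA a * b - b * LA a) + (a * LA b - LA b * a))
          ∧ (∀ a b : A, LX (a * b - b * a)
              = (op b • LX a - b • LX a) + (a • LX b - op a • LX b))
          ∧ (∀ (a : A) (x : X), T (a • x - op a • x) = a * T x - T x * a)
          ∧ (∀ x y : X, T x • y - op (T x) • y = T y • x - op (T y) • x)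
          ∧ (∀ (a : A) (x : X), S (a • x - op a • x)
              = (LA a • x - op (LA a) • x) + (a • S x - op a • S x))) := by
  have hLie : (∀ u v : TrivSqZeroExt A X,
      L (u * v - v * u) = (L u * v - v * L u) + (u * L v - L v * u))
      ↔ ∀ u v, lieDefect L u v = 0 := by
    simp only [lieDefect_eq_zero_iff, Ring.lie_def]
  rw [hLie, forall_eq_zero_iff_of_add_left_of_swap _ (lieDefect_add_left L) (lieDefect_swap L)]
  simp only [lieDefect_inl_inl_of_components hL, lieDefect_inl_inr_of_components hL,
    lieDefect_inr_inr_of_components hL, inl_add_inr_eq_zero_iff, neg_eq_zero, inr_eq_zero_iff,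
    lieDefect_eq_zero_iff, Ring.lie_def, sub_eq_zero, forall_and]
  tauto

/-- Characterization of Lie derivations on the trivial extension
algebra `A ⋉ X` (realized as `TrivSqZeroExt A X`) in terms of the components
`L_A, T, L_X, S` of a linear map `L`. -/
theorem lieDerivation_trivialExtension_iff
    {R A X : Type*} [CommRing R] [Ring A] [Algebra R A]
    [AddCommGroup X] [Module R X] [Module A X] [Module Aᵐᵒᵖ X]
    [SMulCommClass A Aᵐᵒᵖ X] [IsScalarTower R A X] [IsScalarTower R Aᵐᵒᵖ X]
    (L : TrivSqZeroExt A X →ₗ[R] TrivSqZeroExt A X)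
    (LA : A →ₗ[R] A) (T : X →ₗ[R] A) (LX : A →ₗ[R] X) (S : X →ₗ[R] X)
    (hL : ∀ (a : A) (x : X), L (inl a + inr x) = inl (LA a + T x) + inr (LX a + S x)) :
    (∀ u v : TrivSqZeroExt A X,
        L (u * v - v * u) = (L u * v - v * L u) + (u * L v - L v * u))
      ↔ ((∀ a b : A, LA (a * b - b * a) = (LA a * b - b * LA a) + (a * LA b - LA b * a))
          ∧ (∀ a b : A, LX (a * b - b * a)
              = (op b • LX a - b • LX a) + (a • LX b - op a • LX b))
          ∧ (∀ (a : A) (x : X), T (a • x - op a • x) = a * T x - T x * a)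
          ∧ (∀ x y : X, T x • y - op (T x) • y = T y • x - op (T y) • x)
          ∧ (∀ (a : A) (x : X), S (a • x - op a • x)
              = (LA a • x - op (LA a) • x) + (a • S x - op a • S x))) :=
  lieDerivation_trivialExtension_iff_general L LA T LX S hL
end

section
/- Let L be a linear map on the trivial extension algebra A⋉X, written in components as L(a,x) = (L_A(a)+T(x), L_X(a)+S(x)) for linear maps L_A:A→A, T:X→A, L_X:A→X, S:X→X. Then L is a derivation on A⋉X if and only if: (i) L_A is a derivation on A and L_X:A→X is a derivation; (ii) T(a·x) = aT(x), T(x·a) = T(x)a, and x·T(y) + T(x)·y = 0 for all a∈A and x,y∈X; and (iii) S(a·x) = a·S(x) + L_A(a)·x and S(x·a) = S(x)·a + x·L_A(a) for all a∈A, x∈X. -/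
open TrivSqZeroExt MulOpposite

/-!
Both sides of the Leibniz rule are biadditive in `(u, v)` and `A ⋉ X` is additively generated by
`inl A` and `inr X`, so `L` is a derivation iff the Leibniz rule holds on the four kinds of pairs of
generators. Reading off the two components of each of these four identities gives exactly the
seven conditions; the `(inr x, inr y)` identity has trivial first component, because
`inr x * inr y = 0`.
-/

namespace TrivSqZeroExt

theorem forall_leibniz_iff {A X F : Type*} [Semiring A] [AddCommMonoid X] [Module A X]
    [Module Aᵐᵒᵖ X] [FunLike F (TrivSqZeroExt A X) (TrivSqZeroExt A X)]
    [AddHomClass F (TrivSqZeroExt A X) (TrivSqZeroExt A X)] (D : F) :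
    (∀ u v : TrivSqZeroExt A X, D (u * v) = D u * v + u * D v) ↔
      (∀ a b : A, D (inl a * inl b) = D (inl a) * inl b + inl a * D (inl b)) ∧
      (∀ (a : A) (x : X), D (inl a * inr x) = D (inl a) * inr x + inl a * D (inr x)) ∧
      (∀ (a : A) (x : X), D (inr x * inl a) = D (inr x) * inl a + inr x * D (inl a)) ∧
      (∀ x y : X, D (inr x * inr y) = D (inr x) * inr y + inr x * D (inr y)) := by
  refine ⟨fun h ↦ ⟨fun _ _ ↦ h _ _, fun _ _ ↦ h _ _, fun _ _ ↦ h _ _, fun _ _ ↦ h _ _⟩, ?_⟩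
  rintro ⟨hll, hlr, hrl, hrr⟩ u v
  rw [← inl_fst_add_inr_snd_eq u, ← inl_fst_add_inr_snd_eq v]
  simp only [add_mul, mul_add, map_add, hll, hlr, hrl, hrr]
  abel

end TrivSqZeroExt

section Components

variable {R A X : Type*} [CommRing R] [Ring A] [Algebra R A] [AddCommGroup X] [Module R X]
    {L : TrivSqZeroExt A X →ₗ[R] TrivSqZeroExt A X}
    {LA : A →ₗ[R] A} {T : X →ₗ[R] A} {LX : A →ₗ[R] X} {S : X →ₗ[R] X}
    (hL : ∀ (a : A) (x : X), L (inl a + inr x) = inl (LA a + T x) + inr (LX a + S x))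
include hL

theorem fst_apply_of_components (u : TrivSqZeroExt A X) : (L u).fst = LA u.fst + T u.snd := by
  rw [← inl_fst_add_inr_snd_eq u, hL]
  simp

theorem snd_apply_of_components (u : TrivSqZeroExt A X) : (L u).snd = LX u.fst + S u.snd := by
  rw [← inl_fst_add_inr_snd_eq u, hL]
  simp

variable [Module A X] [Module Aᵐᵒᵖ X]

theorem leibniz_inl_inl_iff (a b : A) :
    L (inl a * inl b) = L (inl a) * inl b + inl a * L (inl b) ↔
      LA (a * b) = LA a * b + a * LA b ∧ LX (a * b) = a • LX b + op b • LX a := by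
  simp [TrivSqZeroExt.ext_iff, fst_apply_of_components hL, snd_apply_of_components hL, add_comm]

theorem leibniz_inl_inr_iff (a : A) (x : X) :
    L (inl a * inr x) = L (inl a) * inr x + inl a * L (inr x) ↔
      T (a • x) = a * T x ∧ S (a • x) = a • S x + LA a • x := by
  simp [TrivSqZeroExt.ext_iff, fst_apply_of_components hL, snd_apply_of_components hL, add_comm]

theorem leibniz_inr_inl_iff (x : X) (a : A) :
    L (inr x * inl a) = L (inr x) * inl a + inr x * L (inl a) ↔
      T (op a • x) = T x * a ∧ S (op a • x) = op a • S x + op (LA a) • x := by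
  simp [TrivSqZeroExt.ext_iff, fst_apply_of_components hL, snd_apply_of_components hL]

theorem leibniz_inr_inr_iff (x y : X) :
    L (inr x * inr y) = L (inr x) * inr y + inr x * L (inr y) ↔ op (T y) • x + T x • y = 0 := by
  simp [TrivSqZeroExt.ext_iff, fst_apply_of_components hL, snd_apply_of_components hL, add_comm,
    eq_comm]

end Components

theorem derivation_trivialExtension_iff_general
    {R A X : Type*} [CommRing R] [Ring A] [Algebra R A]
    [AddCommGroup X] [Module R X] [Module A X] [Module Aᵐᵒᵖ X]
    (L : TrivSqZeroExt A X →ₗ[R] TrivSqZeroExt A X)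
    (LA : A →ₗ[R] A) (T : X →ₗ[R] A) (LX : A →ₗ[R] X) (S : X →ₗ[R] X)
    (hL : ∀ (a : A) (x : X), L (inl a + inr x) = inl (LA a + T x) + inr (LX a + S x)) :
    (∀ u v : TrivSqZeroExt A X, L (u * v) = L u * v + u * L v)
      ↔ ((∀ a b : A, LA (a * b) = LA a * b + a * LA b)
          ∧ (∀ a b : A, LX (a * b) = a • LX b + op b • LX a)
          ∧ (∀ (a : A) (x : X), T (a • x) = a * T x)
          ∧ (∀ (a : A) (x : X), T (op a • x) = T x * a)
          ∧ (∀ x y : X, op (T y) • x + T x • y = 0)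
          ∧ (∀ (a : A) (x : X), S (a • x) = a • S x + LA a • x)
          ∧ (∀ (a : A) (x : X), S (op a • x) = op a • S x + op (LA a) • x)) := by
  rw [forall_leibniz_iff L]
  simp only [leibniz_inl_inl_iff hL, leibniz_inl_inr_iff hL, leibniz_inr_inl_iff hL,
    leibniz_inr_inr_iff hL, forall_and]
  tauto

/-- Characterization of derivations on the trivial extension
algebra `A ⋉ X` (realized as `TrivSqZeroExt A X`) in terms of the components
`L_A, T, L_X, S` of a linear map `L`. -/
theorem derivation_trivialExtension_iff
    {R A X : Type*} [CommRing R] [Ring A] [Algebra R A]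
    [AddCommGroup X] [Module R X] [Module A X] [Module Aᵐᵒᵖ X]
    [SMulCommClass A Aᵐᵒᵖ X] [IsScalarTower R A X] [IsScalarTower R Aᵐᵒᵖ X]
    (L : TrivSqZeroExt A X →ₗ[R] TrivSqZeroExt A X)
    (LA : A →ₗ[R] A) (T : X →ₗ[R] A) (LX : A →ₗ[R] X) (S : X →ₗ[R] X)
    (hL : ∀ (a : A) (x : X), L (inl a + inr x) = inl (LA a + T x) + inr (LX a + S x)) :
    (∀ u v : TrivSqZeroExt A X, L (u * v) = L u * v + u * L v)
      ↔ ((∀ a b : A, LA (a * b) = LA a * b + a * LA b)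
          ∧ (∀ a b : A, LX (a * b) = a • LX b + op b • LX a)
          ∧ (∀ (a : A) (x : X), T (a • x) = a * T x)
          ∧ (∀ (a : A) (x : X), T (op a • x) = T x * a)
          ∧ (∀ x y : X, op (T y) • x + T x • y = 0)
          ∧ (∀ (a : A) (x : X), S (a • x) = a • S x + LA a • x)
          ∧ (∀ (a : A) (x : X), S (op a • x) = op a • S x + op (LA a) • x)) :=
  derivation_trivialExtension_iff_general L LA T LX S hL
end

section
/- Suppose the trivial extension algebra A⋉X satisfies condition (★). Then π_X(Z(A⋉X)) = {0}, and consequently Z(A⋉X) = {(a,0) : a∈Z(A) and [a,x]=0 for all x∈X} = π_A(Z(A⋉X)) × {0}. -/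
open TrivSqZeroExt MulOpposite

/-! A central `(a, x)` of `A ⋉ X` commutes with `(p, 0)`, so `p • x = x <• p`; under (★) this gives
`x = p • x <• q = x <• (p * q) = 0`. What remains of centrality is then exactly the condition on `a`. -/

namespace TrivSqZeroExt

theorem mem_center_iff {R M : Type*} [Semiring R] [AddCommMonoid M] [Module R M]
    [Module Rᵐᵒᵖ M] [SMulCommClass R Rᵐᵒᵖ M] {u : TrivSqZeroExt R M} :
    u ∈ Set.center (TrivSqZeroExt R M) ↔
      u.fst ∈ Set.center R ∧ (∀ m : M, u.fst • m = op u.fst • m) ∧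
        ∀ r : R, r • u.snd = op r • u.snd := by
  simp only [Semigroup.mem_center_iff]
  constructor
  · intro h
    refine ⟨fun r => by simpa using congrArg fst (h (inl r)),
      fun m => by simpa using (congrArg snd (h (inr m))).symm,
      fun r => by simpa using congrArg snd (h (inl r))⟩
  · rintro ⟨hfst, hsmul, hsnd⟩ g
    ext
    · simpa using hfst g.fst
    · simp only [snd_mul, hsmul g.snd, hsnd g.fst]
      exact add_comm _ _

end TrivSqZeroExt

theorem eq_zero_of_smul_eq_op_smul_of_isIdempotentElem {R M : Type*} [Ring R] [AddCommGroup M]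
    [SMul R M] [Module Rᵐᵒᵖ M] {p : R} (hp : IsIdempotentElem p) {m : M}
    (hm : op (1 - p) • p • m = m) (hcomm : p • m = op p • m) : m = 0 := by
  rw [← hm, hcomm, smul_smul, ← op_mul, mul_sub, mul_one, hp.eq, sub_self, op_zero, zero_smul]

theorem center_trivialExtension_of_star_general
    {A X : Type*} [Ring A]
    [AddCommGroup X] [Module A X] [Module Aᵐᵒᵖ X]
    [SMulCommClass A Aᵐᵒᵖ X]
    (p : A) (hp : p * p = p)
    (hstar : ∀ x : X, op (1 - p) • (p • x) = x) :
    TrivSqZeroExt.snd '' Set.center (TrivSqZeroExt A X) = ({0} : Set X)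
      ∧ Set.center (TrivSqZeroExt A X)
        = {u : TrivSqZeroExt A X | u.fst ∈ Set.center A
            ∧ (∀ x : X, u.fst • x = op u.fst • x) ∧ u.snd = 0}
      ∧ Set.center (TrivSqZeroExt A X)
        = {u : TrivSqZeroExt A X |
            u.fst ∈ TrivSqZeroExt.fst '' Set.center (TrivSqZeroExt A X)
            ∧ u.snd = 0} := by
  have hsnd {u : TrivSqZeroExt A X} (hu : u ∈ Set.center (TrivSqZeroExt A X)) : u.snd = 0 :=
    eq_zero_of_smul_eq_op_smul_of_isIdempotentElem hp (hstar u.snd) ((mem_center_iff.mp hu).2.2 p)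
  have hcenter : Set.center (TrivSqZeroExt A X)
      = {u | u.fst ∈ Set.center A ∧ (∀ x : X, u.fst • x = op u.fst • x) ∧ u.snd = 0} := by
    ext u
    refine ⟨fun hu => ⟨(mem_center_iff.mp hu).1, (mem_center_iff.mp hu).2.1, hsnd hu⟩, ?_⟩
    rintro ⟨hfst, hsmul, hu⟩
    exact mem_center_iff.mpr ⟨hfst, hsmul, fun r => by simp [hu]⟩
  refine ⟨?_, hcenter, ?_⟩
  · refine Set.eq_singleton_iff_unique_mem.mpr ⟨⟨0, Set.zero_mem_center, rfl⟩, ?_⟩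
    rintro _ ⟨u, hu, rfl⟩
    exact hsnd hu
  · ext u
    refine ⟨fun hu => ⟨⟨u, hu, rfl⟩, hsnd hu⟩, ?_⟩
    rintro ⟨⟨v, hv, hvu⟩, hu⟩
    rw [hcenter] at hv ⊢
    exact ⟨hvu ▸ hv.1, hvu ▸ hv.2.1, hu⟩

/-- If the trivial extension algebra `A ⋉ X` satisfies
condition (★) (there is a nontrivial idempotent `p` of `A` with `p·x·q = x`
for all `x ∈ X`, where `q = 1 - p`), then `π_X(Z(A ⋉ X)) = {0}` and
consequently `Z(A ⋉ X) = {(a, 0) : a ∈ Z(A), [a, x] = 0 ∀ x}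
= π_A(Z(A ⋉ X)) × {0}`. -/
theorem center_trivialExtension_of_star
    {R A X : Type*} [CommRing R] [Ring A] [Algebra R A]
    [AddCommGroup X] [Module R X] [Module A X] [Module Aᵐᵒᵖ X]
    [SMulCommClass A Aᵐᵒᵖ X] [IsScalarTower R A X] [IsScalarTower R Aᵐᵒᵖ X]
    (p : A) (hp : p * p = p) (hp0 : p ≠ 0) (hp1 : p ≠ 1)
    (hstar : ∀ x : X, op (1 - p) • (p • x) = x) :
    TrivSqZeroExt.snd '' Set.center (TrivSqZeroExt A X) = ({0} : Set X)
      ∧ Set.center (TrivSqZeroExt A X)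
        = {u : TrivSqZeroExt A X | u.fst ∈ Set.center A
            ∧ (∀ x : X, u.fst • x = op u.fst • x) ∧ u.snd = 0}
      ∧ Set.center (TrivSqZeroExt A X)
        = {u : TrivSqZeroExt A X |
            u.fst ∈ TrivSqZeroExt.fst '' Set.center (TrivSqZeroExt A X)
            ∧ u.snd = 0} :=
  center_trivialExtension_of_star_general p hp hstar
end

section
/- Suppose the trivial extension algebra A⋉X satisfies condition (★), A is 2-torsion free, and L is a Lie derivation on A⋉X with components L(a,x) = (L_A(a)+T(x), L_X(a)+S(x)). Then T(a·x) = aT(x) and T(x·a) = T(x)a for all a∈A and x∈X. -/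
open TrivSqZeroExt MulOpposite

/-!
Testing the Lie identity on `(a, 0)` and `(0, x)` and taking first components gives
`T(a·x − x·a) = a T(x) − T(x) a`. Since `p` acts as the identity on the left of `X` and as zero
on the right, the case `a = p` together with 2-torsion freeness puts every `T(x)` in the corner
`pAq`, where `q = 1 − p`. The cases `pa` and `aq` then give `T(a·x) = paT(x)` and
`T(x·a) = T(x)aq`, and feeding these back into the identity for `a` forces `qaT(x) = 0 = T(x)ap`.
-/

/-- The bimodule `X` is the off-diagonal Peirce component `p X (1 - p)`. -/
def IsOffDiagonalBimodule {A : Type*} (X : Type*) [Ring A] [AddCommGroup X] [Module A X]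
    [Module Aᵐᵒᵖ X] (p : A) : Prop :=
  ∀ x : X, op (1 - p) • (p • x) = x

namespace IsOffDiagonalBimodule

variable {A X : Type*} [Ring A] [AddCommGroup X] [Module A X] [Module Aᵐᵒᵖ X]
  [SMulCommClass A Aᵐᵒᵖ X] {p : A}

theorem smul_eq_self (h : IsOffDiagonalBimodule X p) (hp : IsIdempotentElem p) (x : X) :
    p • x = x :=
  calc p • x = p • (op (1 - p) • (p • x)) := by rw [h]
    _ = op (1 - p) • (p • p • x) := smul_comm _ _ _
    _ = x := by rw [smul_smul, hp.eq, h]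

theorem one_sub_smul_eq_zero (h : IsOffDiagonalBimodule X p) (hp : IsIdempotentElem p)
    (x : X) : (1 - p) • x = 0 := by
  rw [sub_smul, one_smul, h.smul_eq_self hp, sub_self]

theorem op_one_sub_smul_eq_self (h : IsOffDiagonalBimodule X p) (hp : IsIdempotentElem p)
    (x : X) : op (1 - p) • x = x := by
  conv_lhs => rw [← h.smul_eq_self hp x]
  exact h x

theorem op_smul_eq_zero (h : IsOffDiagonalBimodule X p) (hp : IsIdempotentElem p) (x : X) :
    op p • x = 0 := by
  rw [← h.op_one_sub_smul_eq_self hp x, smul_smul, ← op_mul, hp.one_sub_mul_self,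
    op_zero, zero_smul]

variable {T : X →+ A}

theorem map_mul_eq_zero (h : IsOffDiagonalBimodule X p) (hp : IsIdempotentElem p)
    (htor : ∀ a : A, a + a = 0 → a = 0)
    (hT : ∀ (a : A) (x : X), T (a • x - op a • x) = a * T x - T x * a) (x : X) :
    T x * p = 0 := by
  have hx : T x = p * T x - T x * p := by
    simpa [h.smul_eq_self hp, h.op_smul_eq_zero hp] using hT p x
  have hpxp : p * T x * p = 0 := by
    have hpx : p * T x = p * T x - p * T x * p := by
      conv_lhs => rw [hx]
      rw [mul_sub, ← mul_assoc, ← mul_assoc, hp.eq]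
    exact sub_eq_self.mp hpx.symm
  refine htor _ ?_
  calc T x * p + T x * p = (p * T x - T x * p) * p + T x * p := by rw [← hx]
    _ = 0 := by rw [sub_mul, mul_assoc (T x), hp.eq, hpxp]; abel

theorem mul_map_eq_self (h : IsOffDiagonalBimodule X p) (hp : IsIdempotentElem p)
    (htor : ∀ a : A, a + a = 0 → a = 0)
    (hT : ∀ (a : A) (x : X), T (a • x - op a • x) = a * T x - T x * a) (x : X) :
    p * T x = T x := by
  have hx := hT p x
  rw [h.smul_eq_self hp, h.op_smul_eq_zero hp, sub_zero, h.map_mul_eq_zero hp htor hT,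
    sub_zero] at hx
  exact hx.symm

theorem one_sub_mul_map_eq_zero (h : IsOffDiagonalBimodule X p) (hp : IsIdempotentElem p)
    (htor : ∀ a : A, a + a = 0 → a = 0)
    (hT : ∀ (a : A) (x : X), T (a • x - op a • x) = a * T x - T x * a) (x : X) :
    (1 - p) * T x = 0 := by
  rw [sub_mul, one_mul, h.mul_map_eq_self hp htor hT, sub_self]

theorem map_smul_eq_mul_mul (h : IsOffDiagonalBimodule X p) (hp : IsIdempotentElem p)
    (htor : ∀ a : A, a + a = 0 → a = 0)
    (hT : ∀ (a : A) (x : X), T (a • x - op a • x) = a * T x - T x * a) (a : A) (x : X) :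
    T (a • x) = p * a * T x := by
  have hx := hT (p * a) x
  rwa [mul_smul, h.smul_eq_self hp, op_mul, mul_smul, h.op_smul_eq_zero hp, smul_zero, sub_zero,
    ← mul_assoc, h.map_mul_eq_zero hp htor hT, zero_mul, sub_zero] at hx

theorem map_op_smul_eq_mul_mul (h : IsOffDiagonalBimodule X p) (hp : IsIdempotentElem p)
    (htor : ∀ a : A, a + a = 0 → a = 0)
    (hT : ∀ (a : A) (x : X), T (a • x - op a • x) = a * T x - T x * a) (a : A) (x : X) :
    T (op a • x) = T x * a * (1 - p) := by
  have hx := hT (a * (1 - p)) x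
  rwa [mul_smul, h.one_sub_smul_eq_zero hp, smul_zero, op_mul, mul_smul,
    h.op_one_sub_smul_eq_self hp, zero_sub, map_neg, mul_assoc,
    h.one_sub_mul_map_eq_zero hp htor hT, mul_zero, zero_sub, neg_inj, ← mul_assoc] at hx

theorem one_sub_mul_mul_map_eq_map_mul_mul (h : IsOffDiagonalBimodule X p)
    (hp : IsIdempotentElem p) (htor : ∀ a : A, a + a = 0 → a = 0)
    (hT : ∀ (a : A) (x : X), T (a • x - op a • x) = a * T x - T x * a) (a : A) (x : X) :
    (1 - p) * a * T x = T x * a * p := by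
  have hx := hT a x
  rw [map_sub, h.map_smul_eq_mul_mul hp htor hT, h.map_op_smul_eq_mul_mul hp htor hT] at hx
  linear_combination (norm := noncomm_ring) -hx

theorem one_sub_mul_mul_map_eq_zero (h : IsOffDiagonalBimodule X p) (hp : IsIdempotentElem p)
    (htor : ∀ a : A, a + a = 0 → a = 0)
    (hT : ∀ (a : A) (x : X), T (a • x - op a • x) = a * T x - T x * a) (a : A) (x : X) :
    (1 - p) * a * T x = 0 :=
  calc (1 - p) * a * T x = (1 - p) * ((1 - p) * a * T x) := by
        rw [← mul_assoc, ← mul_assoc, hp.one_sub.eq]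
    _ = (1 - p) * T x * (a * p) := by
        rw [h.one_sub_mul_mul_map_eq_map_mul_mul hp htor hT]; noncomm_ring
    _ = 0 := by rw [h.one_sub_mul_map_eq_zero hp htor hT, zero_mul]

theorem map_smul_eq_mul (h : IsOffDiagonalBimodule X p) (hp : IsIdempotentElem p)
    (htor : ∀ a : A, a + a = 0 → a = 0)
    (hT : ∀ (a : A) (x : X), T (a • x - op a • x) = a * T x - T x * a) (a : A) (x : X) :
    T (a • x) = a * T x := by
  have hqa := h.one_sub_mul_mul_map_eq_zero hp htor hT a x
  rw [sub_mul, sub_mul, one_mul, sub_eq_zero] at hqa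
  rw [h.map_smul_eq_mul_mul hp htor hT, hqa]

theorem map_op_smul_eq_mul (h : IsOffDiagonalBimodule X p) (hp : IsIdempotentElem p)
    (htor : ∀ a : A, a + a = 0 → a = 0)
    (hT : ∀ (a : A) (x : X), T (a • x - op a • x) = a * T x - T x * a) (a : A) (x : X) :
    T (op a • x) = T x * a := by
  rw [h.map_op_smul_eq_mul_mul hp htor hT, mul_one_sub,
    ← h.one_sub_mul_mul_map_eq_map_mul_mul hp htor hT, h.one_sub_mul_mul_map_eq_zero hp htor hT,
    sub_zero]

end IsOffDiagonalBimodule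

theorem TrivSqZeroExt.fst_apply_inr_smul_sub_op_smul {A X : Type*} [Ring A] [AddCommGroup X]
    [Module A X] [Module Aᵐᵒᵖ X] [SMulCommClass A Aᵐᵒᵖ X]
    (L : TrivSqZeroExt A X → TrivSqZeroExt A X)
    (hLie : ∀ u v : TrivSqZeroExt A X,
      L (u * v - v * u) = (L u * v - v * L u) + (u * L v - L v * u))
    (a : A) (x : X) :
    (L (inr (a • x - op a • x))).fst = a * (L (inr x)).fst - (L (inr x)).fst * a := by
  have h := congrArg fst (hLie (inl a) (inr x))
  rw [inl_mul_inr, inr_mul_inl, ← inr_sub] at h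
  simpa using h

theorem lieDerivation_component_T_module_map_general
    {R A X : Type*} [CommRing R] [Ring A] [Algebra R A]
    [AddCommGroup X] [Module R X] [Module A X] [Module Aᵐᵒᵖ X]
    [SMulCommClass A Aᵐᵒᵖ X]
    (p : A) (hp : p * p = p)
    (hstar : ∀ x : X, op (1 - p) • (p • x) = x)
    (htorA : ∀ a : A, a + a = 0 → a = 0)
    (L : TrivSqZeroExt A X →ₗ[R] TrivSqZeroExt A X)
    (hLie : ∀ u v : TrivSqZeroExt A X,
        L (u * v - v * u) = (L u * v - v * L u) + (u * L v - L v * u))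
    (LA : A →ₗ[R] A) (T : X →ₗ[R] A) (LX : A →ₗ[R] X) (S : X →ₗ[R] X)
    (hL : ∀ (a : A) (x : X), L (inl a + inr x) = inl (LA a + T x) + inr (LX a + S x)) :
    (∀ (a : A) (x : X), T (a • x) = a * T x)
    ∧ (∀ (a : A) (x : X), T (op a • x) = T x * a) := by
  have hX : IsOffDiagonalBimodule X p := hstar
  have hfst (x : X) : (L (inr x)).fst = T x := by simpa using congrArg fst (hL 0 x)
  have hT (a : A) (x : X) : T.toAddMonoidHom (a • x - op a • x) = a * T x - T x * a := by
    have h := fst_apply_inr_smul_sub_op_smul L hLie a x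
    rw [hfst, hfst] at h
    exact h
  exact ⟨hX.map_smul_eq_mul hp htorA hT, hX.map_op_smul_eq_mul hp htorA hT⟩

/-- If `A ⋉ X` satisfies (★), `A` is 2-torsion free and `L`
is a Lie derivation on `A ⋉ X` with components `(L_A, T, L_X, S)`, then
`T(a·x) = aT(x)` and `T(x·a) = T(x)a` for all `a ∈ A`, `x ∈ X`. -/
theorem lieDerivation_component_T_module_map
    {R A X : Type*} [CommRing R] [Ring A] [Algebra R A]
    [AddCommGroup X] [Module R X] [Module A X] [Module Aᵐᵒᵖ X]
    [SMulCommClass A Aᵐᵒᵖ X] [IsScalarTower R A X] [IsScalarTower R Aᵐᵒᵖ X]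
    (p : A) (hp : p * p = p) (hp0 : p ≠ 0) (hp1 : p ≠ 1)
    (hstar : ∀ x : X, op (1 - p) • (p • x) = x)
    (htorA : ∀ a : A, a + a = 0 → a = 0)
    (L : TrivSqZeroExt A X →ₗ[R] TrivSqZeroExt A X)
    (hLie : ∀ u v : TrivSqZeroExt A X,
        L (u * v - v * u) = (L u * v - v * L u) + (u * L v - L v * u))
    (LA : A →ₗ[R] A) (T : X →ₗ[R] A) (LX : A →ₗ[R] X) (S : X →ₗ[R] X)
    (hL : ∀ (a : A) (x : X), L (inl a + inr x) = inl (LA a + T x) + inr (LX a + S x)) :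
    (∀ (a : A) (x : X), T (a • x) = a * T x)
    ∧ (∀ (a : A) (x : X), T (op a • x) = T x * a) :=
  lieDerivation_component_T_module_map_general p hp hstar htorA L hLie LA T LX S hL
end

section
/- Suppose the trivial extension algebra A⋉X satisfies condition (★) and L is a Lie derivation on A⋉X with components L(a,x) = (L_A(a)+T(x), L_X(a)+S(x)). Then the map φ : A → X defined by φ(a) = L_X(paq) is a derivation, i.e. φ(ab) = a·φ(b) + φ(a)·b for all a,b∈A. -/
/-!
Condition (★) says `X = pXq` with `q = 1 - p`, so `p` and `q` act on `X` as the identity from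
the left and from the right respectively, while `q` (left) and `p` (right) annihilate it. The
`X`-component `D = L_X` of a Lie derivation satisfies `D [a, b] = [D a, b] + [a, D b]`. Since
`qp = 0`, the commutator of `pa` and `bq` is the product `pabq`, and the corner actions reduce
the identity to `D (pabq) = D(pa)·b + a·D(bq)`. Specialising to `b = 1` and `a = 1`, and using
`D q = -D p` (which follows from `D 1 = 0`), the terms `D(pa)` and `D(bq)` cancel out of the
Leibniz rule for `a ↦ D(paq)`.
-/

open TrivSqZeroExt MulOpposite

section Corner

variable {A X : Type*} [Ring A] [AddCommGroup X] [Module A X] [Module Aᵐᵒᵖ X] {p : A}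

theorem smul_eq_self_of_forall_op_one_sub_smul_smul [SMulCommClass A Aᵐᵒᵖ X]
    (hp : IsIdempotentElem p) (h : ∀ x : X, op (1 - p) • p • x = x) (x : X) :
    p • x = x := by
  rw [← h x, smul_comm, smul_smul, hp.eq]

theorem op_smul_eq_zero_of_forall_op_one_sub_smul_smul [SMulCommClass A Aᵐᵒᵖ X]
    (hp : IsIdempotentElem p) (h : ∀ x : X, op (1 - p) • p • x = x) (x : X) :
    op p • x = 0 := by
  have hq : op (1 - p) • x = x := by
    conv_lhs => rw [← smul_eq_self_of_forall_op_one_sub_smul_smul hp h x]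
    exact h x
  rw [← hq, smul_smul, ← op_mul, hp.one_sub_mul_self, op_zero, zero_smul]

variable {D : A →+ X}

theorem map_one_eq_zero_of_lie (hleft : ∀ x : X, p • x = x) (hright : ∀ x : X, op p • x = 0)
    (hD : ∀ a b, D (a * b - b * a) = op b • D a - b • D a + (a • D b - op a • D b)) :
    D 1 = 0 := by
  simpa [hleft, hright] using (hD p 1).symm

theorem map_mul_mul_one_sub_of_lie (hp : IsIdempotentElem p) (hleft : ∀ x : X, p • x = x)
    (hright : ∀ x : X, op p • x = 0)
    (hD : ∀ a b, D (a * b - b * a) = op b • D a - b • D a + (a • D b - op a • D b))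
    (a b : A) :
    D (p * a * (b * (1 - p))) = op b • D (p * a) + a • D (b * (1 - p)) := by
  have hqleft : ∀ x : X, (1 - p) • x = 0 := fun x => by rw [sub_smul, one_smul, hleft, sub_self]
  have hqright : ∀ x : X, op (1 - p) • x = x := fun x => by
    rw [op_sub, op_one, sub_smul, one_smul, hright, sub_zero]
  have hcomm : p * a * (b * (1 - p)) - b * (1 - p) * (p * a) = p * a * (b * (1 - p)) := by
    rw [mul_assoc b, ← mul_assoc (1 - p), hp.one_sub_mul_self, zero_mul, mul_zero, sub_zero]
  rw [← hcomm, hD, op_mul, op_mul, mul_smul, mul_smul, mul_smul, mul_smul, hqright, hqleft,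
    hleft, hright, smul_zero, smul_zero, sub_zero, sub_zero]

theorem map_corner_mul_of_lie [SMulCommClass A Aᵐᵒᵖ X] (hp : IsIdempotentElem p)
    (hleft : ∀ x : X, p • x = x) (hright : ∀ x : X, op p • x = 0)
    (hD : ∀ a b, D (a * b - b * a) = op b • D a - b • D a + (a • D b - op a • D b))
    (a b : A) :
    D (p * (a * b) * (1 - p)) = a • D (p * b * (1 - p)) + op b • D (p * a * (1 - p)) := by
  have hab := map_mul_mul_one_sub_of_lie hp hleft hright hD a b
  have ha := map_mul_mul_one_sub_of_lie hp hleft hright hD a 1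
  have hb := map_mul_mul_one_sub_of_lie hp hleft hright hD 1 b
  have hq : D (1 - p) = -D p := by rw [map_sub, map_one_eq_zero_of_lie hleft hright hD, zero_sub]
  simp only [mul_one, one_mul, op_one, one_smul, hq] at hab ha hb
  rw [show p * (a * b) * (1 - p) = p * a * (b * (1 - p)) by simp only [mul_assoc], hab,
    mul_assoc p b, hb, ha]
  rw [smul_add, smul_add, smul_neg, smul_neg, smul_comm a (op b)]
  abel

end Corner

theorem snd_map_inl_commutator {A X : Type*} [Ring A] [AddCommGroup X] [Module A X]
    [Module Aᵐᵒᵖ X] [SMulCommClass A Aᵐᵒᵖ X]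
    {f : TrivSqZeroExt A X → TrivSqZeroExt A X}
    (hf : ∀ u v, f (u * v - v * u) = (f u * v - v * f u) + (u * f v - f v * u)) (a b : A) :
    (f (inl (a * b - b * a))).snd = op b • (f (inl a)).snd - b • (f (inl a)).snd
      + (a • (f (inl b)).snd - op a • (f (inl b)).snd) := by
  rw [inl_sub, ← inl_mul_inl, ← inl_mul_inl, hf]
  simp [snd_mul]

theorem lieDerivation_component_LX_corner_derivation_general
    {R A X : Type*} [CommRing R] [Ring A] [Algebra R A]
    [AddCommGroup X] [Module R X] [Module A X] [Module Aᵐᵒᵖ X]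
    [SMulCommClass A Aᵐᵒᵖ X]
    (p : A) (hp : p * p = p)
    (hstar : ∀ x : X, op (1 - p) • (p • x) = x)
    (L : TrivSqZeroExt A X →ₗ[R] TrivSqZeroExt A X)
    (hLie : ∀ u v : TrivSqZeroExt A X,
        L (u * v - v * u) = (L u * v - v * L u) + (u * L v - L v * u))
    (LA : A →ₗ[R] A) (T : X →ₗ[R] A) (LX : A →ₗ[R] X) (S : X →ₗ[R] X)
    (hL : ∀ (a : A) (x : X), L (inl a + inr x) = inl (LA a + T x) + inr (LX a + S x)) :
    ∀ a b : A, LX (p * (a * b) * (1 - p))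
      = a • LX (p * b * (1 - p)) + op b • LX (p * a * (1 - p)) := by
  have hLX : ∀ c, (L (inl c)).snd = LX c := fun c => by simpa using congrArg snd (hL c 0)
  refine map_corner_mul_of_lie (D := LX.toAddMonoidHom) hp
    (smul_eq_self_of_forall_op_one_sub_smul_smul hp hstar)
    (op_smul_eq_zero_of_forall_op_one_sub_smul_smul hp hstar) fun a b => ?_
  have h := snd_map_inl_commutator hLie a b
  simp only [hLX] at h
  exact h

/-- If `A ⋉ X` satisfies (★) and `L` is a Lie derivation on
`A ⋉ X` with components `(L_A, T, L_X, S)`, then `φ(a) = L_X(paq)` is a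
derivation from `A` to `X`: `φ(ab) = a·φ(b) + φ(a)·b`. -/
theorem lieDerivation_component_LX_corner_derivation
    {R A X : Type*} [CommRing R] [Ring A] [Algebra R A]
    [AddCommGroup X] [Module R X] [Module A X] [Module Aᵐᵒᵖ X]
    [SMulCommClass A Aᵐᵒᵖ X] [IsScalarTower R A X] [IsScalarTower R Aᵐᵒᵖ X]
    (p : A) (hp : p * p = p) (hp0 : p ≠ 0) (hp1 : p ≠ 1)
    (hstar : ∀ x : X, op (1 - p) • (p • x) = x)
    (L : TrivSqZeroExt A X →ₗ[R] TrivSqZeroExt A X)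
    (hLie : ∀ u v : TrivSqZeroExt A X,
        L (u * v - v * u) = (L u * v - v * L u) + (u * L v - L v * u))
    (LA : A →ₗ[R] A) (T : X →ₗ[R] A) (LX : A →ₗ[R] X) (S : X →ₗ[R] X)
    (hL : ∀ (a : A) (x : X), L (inl a + inr x) = inl (LA a + T x) + inr (LX a + S x)) :
    ∀ a b : A, LX (p * (a * b) * (1 - p))
      = a • LX (p * b * (1 - p)) + op b • LX (p * a * (1 - p)) :=
  lieDerivation_component_LX_corner_derivation_general p hp hstar L hLie LA T LX S hL
end

section
/- Suppose the trivial extension algebra A⋉X satisfies condition (★), L is a Lie derivation on A⋉X with components L(a,x) = (L_A(a)+T(x), L_X(a)+S(x)), and ℓ_A : A → Z(A) is a linear map such that L_A − ℓ_A is a derivation on A. Then for all a,b∈A and x∈X: [ℓ_A(papbp), x] = [ℓ_A(pap), b·x] + [ℓ_A(pbp), a·x]. -/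
/-!
Applying the Lie identity to `(c, 0)` and `(0, y)` and taking second components gives
`S [c, y] = [L_A c, y] + [c, S y]`. Condition (★) says `X = pXq`, so `[pcp, y] = c·y`, and the
derivation `D = L_A − ℓ_A` maps `pcp = pcp·p` into `Ap + pA`, which acts trivially on the right;
hence `S (c·y) = D(pcp)·y + [ℓ_A(pcp), y] + c·S y`. Expanding `S (a·b·x) = S ((apb)·x)` once
through `a·(b·x)` and once through the Leibniz rule for `D (pap·pbp)`, and moving `a` past the
central `ℓ_A(pbp)`, leaves exactly the claimed identity.
-/

open TrivSqZeroExt MulOpposite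

section Bimodule

variable {A X : Type*} [Ring A] [AddCommGroup X] {p : A}

theorem smul_eq_self_of_op_compl_smul_smul [Module A X] [Module Aᵐᵒᵖ X]
    [SMulCommClass A Aᵐᵒᵖ X] (hp : p * p = p) (hstar : ∀ x : X, op (1 - p) • (p • x) = x)
    (x : X) : p • x = x :=
  calc p • x = op (1 - p) • (p • (p • x)) := by rw [← smul_comm p (op (1 - p)), hstar]
    _ = x := by rw [smul_smul, hp, hstar]

theorem op_smul_eq_zero_of_op_compl_smul_smul [Module A X] [Module Aᵐᵒᵖ X]
    [SMulCommClass A Aᵐᵒᵖ X] (hp : p * p = p) (hstar : ∀ x : X, op (1 - p) • (p • x) = x)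
    (x : X) : op p • x = 0 := by
  have h := hstar x
  rwa [smul_eq_self_of_op_compl_smul_smul hp hstar, op_sub, op_one, sub_smul, one_smul,
    sub_eq_self] at h

theorem corner_smul [Module A X] (hleft : ∀ x : X, p • x = x) (c : A) (x : X) :
    (p * c * p) • x = c • x := by
  rw [mul_smul, hleft, mul_smul, hleft]

theorem op_mul_smul_eq_zero [Module Aᵐᵒᵖ X] (hright : ∀ x : X, op p • x = 0) (c : A) (x : X) :
    op (c * p) • x = 0 := by
  rw [op_mul, mul_smul, hright]

theorem op_corner_smul_eq_zero [Module Aᵐᵒᵖ X] (hright : ∀ x : X, op p • x = 0) (c : A)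
    (x : X) : op (p * c * p) • x = 0 :=
  op_mul_smul_eq_zero hright (p * c) x

theorem op_derivation_corner_smul_eq_zero [Module Aᵐᵒᵖ X] (hp : p * p = p)
    (hright : ∀ x : X, op p • x = 0) {D : A → A} (hD : ∀ a b, D (a * b) = D a * b + a * D b)
    (c : A) (x : X) : op (D (p * c * p)) • x = 0 := by
  have hcorner : p * c * p * p = p * c * p := by rw [mul_assoc, hp]
  rw [← hcorner, hD, op_add, add_smul, op_mul_smul_eq_zero hright, op_mul (p * c * p), mul_smul,
    op_corner_smul_eq_zero hright, smul_zero, add_zero]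

theorem smul_sub_op_smul_of_mem_center [Module A X] [Module Aᵐᵒᵖ X] [SMulCommClass A Aᵐᵒᵖ X]
    {z : A} (hz : z ∈ Set.center A) (a : A) (x : X) :
    a • (z • x - op z • x) = z • (a • x) - op z • (a • x) := by
  rw [smul_sub, smul_smul, ← (Set.mem_center_iff.mp hz).comm a, ← smul_smul, smul_comm a (op z)]

end Bimodule

section LieDerivation

variable {R A X : Type*} [CommRing R] [Ring A] [Algebra R A]
    [AddCommGroup X] [Module R X] [Module A X] [Module Aᵐᵒᵖ X]
    (L : TrivSqZeroExt A X →ₗ[R] TrivSqZeroExt A X)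
    (LA : A →ₗ[R] A) (T : X →ₗ[R] A) (LX : A →ₗ[R] X) (S : X →ₗ[R] X)

theorem lieDerivation_snd_lie_inl_inr
    (hLie : ∀ u v : TrivSqZeroExt A X,
        L (u * v - v * u) = (L u * v - v * L u) + (u * L v - L v * u))
    (hL : ∀ (a : A) (x : X), L (inl a + inr x) = inl (LA a + T x) + inr (LX a + S x))
    (c : A) (y : X) :
    S (c • y - op c • y) = (LA c • y - op (LA c) • y) + (c • S y - op c • S y) := by
  have hinl : L (inl c) = inl (LA c) + inr (LX c) := by simpa using hL c 0
  have hinr : ∀ z : X, L (inr z) = inl (T z) + inr (S z) := fun z => by simpa using hL 0 z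
  have hcomm : (inl c * inr y - inr y * inl c : TrivSqZeroExt A X) = inr (c • y - op c • y) := by
    ext <;> simp
  have h := congrArg snd (hLie (inl c) (inr y))
  rw [hcomm, hinr, hinr, hinl] at h
  simpa using h

theorem lieDerivation_snd_smul_of_corner {p : A} (hp : p * p = p)
    (hleft : ∀ x : X, p • x = x) (hright : ∀ x : X, op p • x = 0)
    (hLie : ∀ u v : TrivSqZeroExt A X,
        L (u * v - v * u) = (L u * v - v * L u) + (u * L v - L v * u))
    (hL : ∀ (a : A) (x : X), L (inl a + inr x) = inl (LA a + T x) + inr (LX a + S x))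
    (ℓA : A →ₗ[R] A) (hder : ∀ a b : A, (LA - ℓA) (a * b) = (LA - ℓA) a * b + a * (LA - ℓA) b)
    (c : A) (y : X) :
    S (c • y) = (LA - ℓA) (p * c * p) • y
      + (ℓA (p * c * p) • y - op (ℓA (p * c * p)) • y) + c • S y := by
  have h := lieDerivation_snd_lie_inl_inr L LA T LX S hLie hL (p * c * p) y
  have hsplit : LA (p * c * p) = (LA - ℓA) (p * c * p) + ℓA (p * c * p) := by simp
  rw [corner_smul hleft, corner_smul hleft, op_corner_smul_eq_zero hright,
    op_corner_smul_eq_zero hright, sub_zero, sub_zero, hsplit, op_add, add_smul (op _),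
    op_derivation_corner_smul_eq_zero hp hright hder, zero_add] at h
  rw [h, add_smul]
  abel

end LieDerivation

theorem lieDerivation_center_bracket_identity_general
    {R A X : Type*} [CommRing R] [Ring A] [Algebra R A]
    [AddCommGroup X] [Module R X] [Module A X] [Module Aᵐᵒᵖ X]
    [SMulCommClass A Aᵐᵒᵖ X]
    (p : A) (hp : p * p = p)
    (hstar : ∀ x : X, op (1 - p) • (p • x) = x)
    (L : TrivSqZeroExt A X →ₗ[R] TrivSqZeroExt A X)
    (hLie : ∀ u v : TrivSqZeroExt A X,
        L (u * v - v * u) = (L u * v - v * L u) + (u * L v - L v * u))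
    (LA : A →ₗ[R] A) (T : X →ₗ[R] A) (LX : A →ₗ[R] X) (S : X →ₗ[R] X)
    (hL : ∀ (a : A) (x : X), L (inl a + inr x) = inl (LA a + T x) + inr (LX a + S x))
    (ℓA : A →ₗ[R] A) (hcen : ∀ a : A, ℓA a ∈ Set.center A)
    (hder : ∀ a b : A, (LA - ℓA) (a * b) = (LA - ℓA) a * b + a * (LA - ℓA) b) :
    ∀ (a b : A) (x : X),
      ℓA (p * a * p * b * p) • x - op (ℓA (p * a * p * b * p)) • x
        = (ℓA (p * a * p) • (b • x) - op (ℓA (p * a * p)) • (b • x))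
          + (ℓA (p * b * p) • (a • x) - op (ℓA (p * b * p)) • (a • x)) := by
  have hleft := smul_eq_self_of_op_compl_smul_smul hp hstar
  have hright := op_smul_eq_zero_of_op_compl_smul_smul hp hstar
  have hS := lieDerivation_snd_smul_of_corner L LA T LX S hp hleft hright hLie hL ℓA hder
  intro a b x
  have hmid : ∀ y : X, (a * p * b) • y = a • b • y := fun y => by rw [mul_smul, mul_smul, hleft]
  have hcorner : p * (a * p * b) * p = p * a * p * b * p := by simp only [mul_assoc]
  have hprod : (p * a * p) * (p * b * p) = p * a * p * b * p := by
    simp only [mul_assoc, ← mul_assoc p p, hp]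
  have hviaA := hS a (b • x)
  rw [hS b x, smul_add, smul_add, smul_sub_op_smul_of_mem_center (hcen _)] at hviaA
  have hviaAB := hS (a * p * b) x
  rw [hmid, hmid, hcorner, ← hprod, hder, add_smul, mul_smul, corner_smul hleft, mul_smul,
    corner_smul hleft, hprod, hviaA] at hviaAB
  linear_combination (norm := abel) hviaAB.symm

/-- Suppose `A ⋉ X` satisfies (★), `L` is a Lie derivation
on `A ⋉ X` with components `(L_A, T, L_X, S)` and `ℓ_A : A → Z(A)` is a linear
map such that `L_A − ℓ_A` is a derivation.  Then
`[ℓ_A(papbp), x] = [ℓ_A(pap), b·x] + [ℓ_A(pbp), a·x]` for all `a, b ∈ A`,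
`x ∈ X`. -/
theorem lieDerivation_center_bracket_identity
    {R A X : Type*} [CommRing R] [Ring A] [Algebra R A]
    [AddCommGroup X] [Module R X] [Module A X] [Module Aᵐᵒᵖ X]
    [SMulCommClass A Aᵐᵒᵖ X] [IsScalarTower R A X] [IsScalarTower R Aᵐᵒᵖ X]
    (p : A) (hp : p * p = p) (hp0 : p ≠ 0) (hp1 : p ≠ 1)
    (hstar : ∀ x : X, op (1 - p) • (p • x) = x)
    (L : TrivSqZeroExt A X →ₗ[R] TrivSqZeroExt A X)
    (hLie : ∀ u v : TrivSqZeroExt A X,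
        L (u * v - v * u) = (L u * v - v * L u) + (u * L v - L v * u))
    (LA : A →ₗ[R] A) (T : X →ₗ[R] A) (LX : A →ₗ[R] X) (S : X →ₗ[R] X)
    (hL : ∀ (a : A) (x : X), L (inl a + inr x) = inl (LA a + T x) + inr (LX a + S x))
    (ℓA : A →ₗ[R] A) (hcen : ∀ a : A, ℓA a ∈ Set.center A)
    (hder : ∀ a b : A, (LA - ℓA) (a * b) = (LA - ℓA) a * b + a * (LA - ℓA) b) :
    ∀ (a b : A) (x : X),
      ℓA (p * a * p * b * p) • x - op (ℓA (p * a * p * b * p)) • x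
        = (ℓA (p * a * p) • (b • x) - op (ℓA (p * a * p)) • (b • x))
          + (ℓA (p * b * p) • (a • x) - op (ℓA (p * b * p)) • (a • x)) :=
  lieDerivation_center_bracket_identity_general p hp hstar L hLie LA T LX S hL ℓA hcen hder
end

section
/- Suppose the trivial extension algebra A⋉X satisfies condition (★), L is a Lie derivation on A⋉X with components L(a,x) = (L_A(a)+T(x), L_X(a)+S(x)), and ℓ_A : A → Z(A) is a linear map such that L_A − ℓ_A is a derivation on A. If a∈A is such that pap is an idempotent (i.e. (pap)² = pap), then [ℓ_A(pap), x] = 0 for all x∈X. -/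
open TrivSqZeroExt MulOpposite

/-!
Put `e = pap`, `c = L_A(e)` and `z = ℓ_A(e)`. By (★) every `x ∈ X` satisfies `x = xq` and
`qe = 0`, so `X` is annihilated by `e` from the right and `[e, x] = ex`. The Lie derivation
identity for `[(e,0), (0,x)]` then reads `S(ex) = [c, x] + e S(x)`; applying it to `x` and to
`ex` shows that `c` acts on the right of `X` as its Peirce-diagonal part
`(1-e)c(1-e) + ece` acts on the left. Since `d = c - z` is the image of the idempotent `e` under
a derivation, `d = de + ed`, which kills the Peirce-diagonal part of `d` and the right action
of `d` on `X`. Hence `x·z = x·c = ((1-e)z(1-e) + eze)·x = z·x`.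
-/

section Ring

variable {A : Type*} [Ring A]

def peirceDiagonal (e c : A) : A := (1 - e) * c * (1 - e) + e * c * e

theorem IsIdempotentElem.mul_mul_eq_zero_of_eq_mul_add_mul {e d : A} (he : IsIdempotentElem e)
    (hd : d = d * e + e * d) : e * d * e = 0 := by
  have h : e * d * e = e * d * e + e * d * e := by
    conv_lhs => rw [hd]
    calc e * (d * e + e * d) * e = e * d * (e * e) + (e * e) * d * e := by noncomm_ring
      _ = e * d * e + e * d * e := by rw [he.eq]
  exact left_eq_add.mp h

theorem IsIdempotentElem.one_sub_mul_mul_one_sub_eq_zero_of_eq_mul_add_mul {e d : A}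
    (he : IsIdempotentElem e) (hd : d = d * e + e * d) : (1 - e) * d * (1 - e) = 0 := by
  have heq : e * (1 - e) = 0 := by rw [mul_sub, mul_one, he.eq, sub_self]
  have hqe : (1 - e) * e = 0 := by rw [sub_mul, one_mul, he.eq, sub_self]
  rw [hd]
  calc (1 - e) * (d * e + e * d) * (1 - e)
        = (1 - e) * d * (e * (1 - e)) + (1 - e) * e * (d * (1 - e)) := by noncomm_ring
    _ = 0 := by rw [heq, hqe, mul_zero, zero_mul, add_zero]

theorem IsIdempotentElem.peirceDiagonal_eq_of_sub_mem_center {e c z : A}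
    (he : IsIdempotentElem e) (hz : z ∈ Set.center A)
    (hd : c - z = (c - z) * e + e * (c - z)) : peirceDiagonal e c = z := by
  have hde := he.mul_mul_eq_zero_of_eq_mul_add_mul hd
  have hqdq := he.one_sub_mul_mul_one_sub_eq_zero_of_eq_mul_add_mul hd
  have hze : e * z = z * e := (hz.comm e).symm
  calc peirceDiagonal e c
        = (1 - e) * (c - z) * (1 - e) + e * (c - z) * e
          + (z - e * z - z * e + e * z * e + e * z * e) := by
          unfold peirceDiagonal; noncomm_ring
    _ = z := by
          rw [hde, hqdq, mul_assoc e z e, ← hze, ← mul_assoc, he.eq]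
          abel

end Ring

section Bimodule

variable {A X : Type*} [Ring A] [AddCommGroup X] [Module Aᵐᵒᵖ X]

theorem op_smul_eq_zero_of_eq_mul_add_mul {e d : A} (he : ∀ y : X, op e • y = 0)
    (hd : d = d * e + e * d) (x : X) : op d • x = 0 := by
  rw [hd, op_add, add_smul, op_mul, op_mul, mul_smul, mul_smul, he, he, smul_zero, add_zero]

variable [Module A X]

theorem op_smul_eq_self_of_smul_op_smul_eq_self {p : A} (hp : IsIdempotentElem p)
    (hstar : ∀ x : X, op (1 - p) • (p • x) = x) (x : X) : op (1 - p) • x = x := by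
  have hq : op (1 - p) * op (1 - p) = op (1 - p) := by
    rw [← op_mul, (IsIdempotentElem.one_sub hp).eq]
  rw [← hstar x, smul_smul, hq]

theorem op_smul_corner_eq_zero {p : A} (hp : IsIdempotentElem p)
    (hstar : ∀ x : X, op (1 - p) • (p • x) = x) (a : A) (x : X) : op (p * a * p) • x = 0 := by
  have hqe : (1 - p) * (p * a * p) = 0 := by
    rw [sub_mul, one_mul, ← mul_assoc, ← mul_assoc, hp.eq, sub_self]
  rw [← op_smul_eq_self_of_smul_op_smul_eq_self hp hstar x, smul_smul, ← op_mul, hqe, op_zero,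
    zero_smul]

variable [SMulCommClass A Aᵐᵒᵖ X]

theorem op_smul_eq_peirceDiagonal_smul {e c : A} (he : IsIdempotentElem e) (S : X → X)
    (hS : ∀ y : X, S (e • y) = c • y - op c • y + e • S y) (x : X) :
    op c • x = peirceDiagonal e c • x := by
  have hee : ∀ y : X, e • e • y = e • y := fun y => by rw [smul_smul, he.eq]
  have hS' := hS (e • x)
  rw [hee, hS x, smul_add, smul_sub, hee] at hS'
  have hexc : op c • e • x = (e * c * e) • x := by
    have h := congrArg (e • ·) (hS (e • x))
    simp only [hee, smul_add, smul_sub] at h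
    have h' : e • op c • e • x = (e * c * e) • x := by
      rw [mul_assoc, ← smul_smul, ← smul_smul]
      exact (sub_eq_zero.mp (right_eq_add.mp h)).symm
    rwa [smul_comm, hee] at h'
  rw [smul_comm e (op c) x, hexc] at hS'
  unfold peirceDiagonal
  have hexp : ((1 - e) * c * (1 - e) + e * c * e) • x
      = c • x - c • e • x - e • c • x + (e * c * e) • x + (e * c * e) • x := by
    simp only [smul_smul, ← add_smul, ← sub_smul]
    congr 1
    noncomm_ring
  rw [hexp]
  linear_combination (norm := abel_nf) -hS'

end Bimodule

theorem lieDerivation_component_map_bracket {R A X : Type*} [Semiring R] [Ring A] [Module R A]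
    [AddCommGroup X] [Module R X] [Module A X] [Module Aᵐᵒᵖ X]
    (L : TrivSqZeroExt A X →ₗ[R] TrivSqZeroExt A X)
    (hLie : ∀ u v : TrivSqZeroExt A X,
        L (u * v - v * u) = (L u * v - v * L u) + (u * L v - L v * u))
    (LA : A →ₗ[R] A) (T : X →ₗ[R] A) (LX : A →ₗ[R] X) (S : X →ₗ[R] X)
    (hL : ∀ (a : A) (x : X), L (inl a + inr x) = inl (LA a + T x) + inr (LX a + S x))
    (b : A) (y : X) :
    S (b • y - op b • y) = LA b • y - op (LA b) • y + (b • S y - op b • S y) := by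
  have hinl : L (inl b) = inl (LA b) + inr (LX b) := by simpa using hL b 0
  have hinr : L (inr y) = inl (T y) + inr (S y) := by simpa using hL 0 y
  have hbracket : (inl b * inr y - inr y * inl b : TrivSqZeroExt A X)
      = inl 0 + inr (b • y - op b • y) := by
    rw [inl_mul_inr, inr_mul_inl]
    ext <;> simp
  have h := congrArg snd (hLie (inl b) (inr y))
  rw [hbracket, hL, hinl, hinr] at h
  simpa using h

theorem lieDerivation_center_bracket_idempotent_general
    {R A X : Type*} [CommRing R] [Ring A] [Algebra R A]
    [AddCommGroup X] [Module R X] [Module A X] [Module Aᵐᵒᵖ X]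
    [SMulCommClass A Aᵐᵒᵖ X]
    (p : A) (hp : p * p = p)
    (hstar : ∀ x : X, op (1 - p) • (p • x) = x)
    (L : TrivSqZeroExt A X →ₗ[R] TrivSqZeroExt A X)
    (hLie : ∀ u v : TrivSqZeroExt A X,
        L (u * v - v * u) = (L u * v - v * L u) + (u * L v - L v * u))
    (LA : A →ₗ[R] A) (T : X →ₗ[R] A) (LX : A →ₗ[R] X) (S : X →ₗ[R] X)
    (hL : ∀ (a : A) (x : X), L (inl a + inr x) = inl (LA a + T x) + inr (LX a + S x))
    (ℓA : A →ₗ[R] A) (hcen : ∀ a : A, ℓA a ∈ Set.center A)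
    (hder : ∀ a b : A, (LA - ℓA) (a * b) = (LA - ℓA) a * b + a * (LA - ℓA) b) :
    ∀ a : A, (p * a * p) * (p * a * p) = p * a * p →
      ∀ x : X, ℓA (p * a * p) • x = op (ℓA (p * a * p)) • x := by
  intro a he x
  set e := p * a * p
  have hXe : ∀ y : X, op e • y = 0 := op_smul_corner_eq_zero hp hstar a
  have hS : ∀ y : X, S (e • y) = LA e • y - op (LA e) • y + e • S y := fun y => by
    simpa only [hXe, sub_zero] using lieDerivation_component_map_bracket L hLie LA T LX S hL e y
  have hd : LA e - ℓA e = (LA e - ℓA e) * e + e * (LA e - ℓA e) := by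
    simpa only [he, LinearMap.sub_apply] using hder e e
  calc ℓA e • x = peirceDiagonal e (LA e) • x := by
        rw [IsIdempotentElem.peirceDiagonal_eq_of_sub_mem_center he (hcen e) hd]
    _ = op (LA e) • x := (op_smul_eq_peirceDiagonal_smul he S hS x).symm
    _ = op (ℓA e) • x := by
        rw [← sub_add_cancel (LA e) (ℓA e), op_add, add_smul,
          op_smul_eq_zero_of_eq_mul_add_mul hXe hd, zero_add]

/-- Suppose `A ⋉ X` satisfies (★), `L` is a Lie derivation
on `A ⋉ X` with components `(L_A, T, L_X, S)` and `ℓ_A : A → Z(A)` is a linear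
map such that `L_A − ℓ_A` is a derivation.  If `pap` is an idempotent then
`[ℓ_A(pap), x] = 0` for all `x ∈ X`. -/
theorem lieDerivation_center_bracket_idempotent
    {R A X : Type*} [CommRing R] [Ring A] [Algebra R A]
    [AddCommGroup X] [Module R X] [Module A X] [Module Aᵐᵒᵖ X]
    [SMulCommClass A Aᵐᵒᵖ X] [IsScalarTower R A X] [IsScalarTower R Aᵐᵒᵖ X]
    (p : A) (hp : p * p = p) (hp0 : p ≠ 0) (hp1 : p ≠ 1)
    (hstar : ∀ x : X, op (1 - p) • (p • x) = x)
    (L : TrivSqZeroExt A X →ₗ[R] TrivSqZeroExt A X)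
    (hLie : ∀ u v : TrivSqZeroExt A X,
        L (u * v - v * u) = (L u * v - v * L u) + (u * L v - L v * u))
    (LA : A →ₗ[R] A) (T : X →ₗ[R] A) (LX : A →ₗ[R] X) (S : X →ₗ[R] X)
    (hL : ∀ (a : A) (x : X), L (inl a + inr x) = inl (LA a + T x) + inr (LX a + S x))
    (ℓA : A →ₗ[R] A) (hcen : ∀ a : A, ℓA a ∈ Set.center A)
    (hder : ∀ a b : A, (LA - ℓA) (a * b) = (LA - ℓA) a * b + a * (LA - ℓA) b) :
    ∀ a : A, (p * a * p) * (p * a * p) = p * a * p →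
      ∀ x : X, ℓA (p * a * p) • x = op (ℓA (p * a * p)) • x :=
  lieDerivation_center_bracket_idempotent_general p hp hstar L hLie LA T LX S hL ℓA hcen hder
end

section
/- Suppose the trivial extension algebra A⋉X satisfies condition (★), L is a Lie derivation on A⋉X with components L(a,x) = (L_A(a)+T(x), L_X(a)+S(x)), and ℓ_A : A → Z(A) is a linear map vanishing on all commutators of A such that L_A − ℓ_A is a derivation on A. Then the set A' = {pap : a∈A and [ℓ_A(pap), x] = 0 for all x∈X} is a subalgebra of the corner algebra pAp (an R-submodule closed under multiplication) that contains every idempotent of pAp and every commutator [pap, pbp] of elements of pAp. -/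
open TrivSqZeroExt MulOpposite

/-- The set `A' = {pap : [ℓ_A(pap), x] = 0 for all x ∈ X}` (elements of the
corner `pAp` whose `ℓ_A`-image commutes with the module `X`). -/
def cornerGoodSet {R : Type*} (A : Type*) (X : Type*) [CommRing R] [Ring A] [Algebra R A]
    [AddCommGroup X] [Module R X] [Module A X] [Module Aᵐᵒᵖ X]
    (p : A) (ℓA : A →ₗ[R] A) : Set A :=
  {y : A | p * y * p = y ∧ ∀ x : X, ℓA y • x = op (ℓA y) • x}

/-!
Write `[a, x] = a·x − x·a`, `d = L_A − ℓ_A` and `q = 1 − p`. Since `X = pXq`, `X·p = 0`, so for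
`y ∈ pAp` both `X·y` and `X·d(y)` vanish (use `y = yp` and `d(y) = d(p)y + p d(y)`). The
`X`-component of `L([y, x]) = [L(y), x] + [y, L(x)]` then reads
`S(yx) = d(y)x + [ℓ(y), x] + y S(x)`, and expanding `S((yz)x) = S(y(zx))` both ways yields the
Leibniz rule `[ℓ(yz), x] = [ℓ(y), zx] + y[ℓ(z), x]` on `pAp`. Closure under products follows at
once; for an idempotent `e`, centrality of `ℓ(e)` turns the rule into `[ℓ(e), x] = 2e[ℓ(e), x]`,
which forces `[ℓ(e), x] = 0`. Commutators are killed by `ℓ_A` outright.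
-/

section SemigroupCorner

variable {A : Type*} [Semigroup A] {p y : A}

theorem Subsemigroup.mem_corner_iff_mul_mul_eq (hp : IsIdempotentElem p) :
    y ∈ Subsemigroup.corner p ↔ p * y * p = y := by
  refine ⟨fun hy ↦ ?_, fun hy ↦ ⟨y, hy⟩⟩
  obtain ⟨hpy, hyp⟩ := (Subsemigroup.mem_corner_iff hp).mp hy
  rw [hpy, hyp]

end SemigroupCorner

theorem IsIdempotentElem.eq_zero_of_eq_smul_add_smul {A X : Type*} [Monoid A] [AddCommGroup X]
    [DistribMulAction A X] {e : A} (he : IsIdempotentElem e) {v : X}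
    (hv : v = e • v + e • v) : v = 0 := by
  have hev : e • v = e • v + e • v := by
    conv_lhs => rw [hv]
    rw [smul_add, ← mul_smul, he.eq]
  rw [hv, ← hev, left_eq_add.mp hev]

section RightAction

variable {A X : Type*} [Ring A] [AddCommGroup X] [Module Aᵐᵒᵖ X] {p : A}

theorem op_smul_eq_zero_of_mul_eq_self (hXp : ∀ x : X, op p • x = 0) {y : A}
    (hy : y * p = y) (x : X) : op y • x = 0 := by
  rw [← hy, op_mul, mul_smul, hXp]

theorem op_smul_map_eq_zero_of_mem_corner (hp : IsIdempotentElem p)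
    (hXp : ∀ x : X, op p • x = 0) {D : A → A} (hD : ∀ a b, D (a * b) = D a * b + a * D b)
    {y : A} (hy : y ∈ Subsemigroup.corner p) (x : X) : op (D y) • x = 0 := by
  obtain ⟨hpy, hyp⟩ := (Subsemigroup.mem_corner_iff hp).mp hy
  rw [← hpy, hD, op_add, add_smul, op_mul, op_mul, mul_smul, mul_smul, hXp,
    op_smul_eq_zero_of_mul_eq_self hXp hyp, smul_zero, add_zero]

end RightAction

section Bimodule

variable {A X : Type*} [Ring A] [AddCommGroup X] [Module A X] [Module Aᵐᵒᵖ X]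

def bimodCommutator (a : A) (x : X) : X := a • x - op a • x

theorem bimodCommutator_eq_zero_iff {a : A} {x : X} :
    bimodCommutator a x = 0 ↔ a • x = op a • x :=
  sub_eq_zero

-- (★) says `X = pXq`, hence `X·p = X·qp = 0`.
theorem op_smul_eq_zero_of_forall_peirce {p : A} (hp : IsIdempotentElem p)
    (hstar : ∀ x : X, op (1 - p) • p • x = x) (x : X) : op p • x = 0 := by
  rw [← hstar x, ← mul_smul, ← op_mul, hp.one_sub_mul_self, op_zero, zero_smul]

variable [SMulCommClass A Aᵐᵒᵖ X]

theorem bimodCommutator_smul_of_mem_center {c : A} (hc : c ∈ Set.center A) (a : A) (x : X) :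
    bimodCommutator c (a • x) = a • bimodCommutator c x := by
  simp only [bimodCommutator, smul_sub, ← mul_smul, (hc.comm a).eq, smul_comm a (op c) x]

end Bimodule

section LieDerivation

variable {R A X : Type*} [CommRing R] [Ring A] [Algebra R A] [AddCommGroup X] [Module R X]
  [Module A X] [Module Aᵐᵒᵖ X]

theorem component_map_bimodCommutator {L : TrivSqZeroExt A X →ₗ[R] TrivSqZeroExt A X}
    (hLie : ∀ u v : TrivSqZeroExt A X,
        L (u * v - v * u) = (L u * v - v * L u) + (u * L v - L v * u))
    {LA : A →ₗ[R] A} {T : X →ₗ[R] A} {LX : A →ₗ[R] X} {S : X →ₗ[R] X}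
    (hL : ∀ (a : A) (x : X), L (inl a + inr x) = inl (LA a + T x) + inr (LX a + S x))
    (a : A) (x : X) :
    S (bimodCommutator a x) = bimodCommutator (LA a) x + bimodCommutator a (S x) := by
  have hinl : ∀ a : A, L (inl a) = inl (LA a) + inr (LX a) := fun a ↦ by simpa using hL a 0
  have hinr : ∀ x : X, L (inr x) = inl (T x) + inr (S x) := fun x ↦ by simpa using hL 0 x
  have h := congrArg snd (hLie (inl a) (inr x))
  rw [inl_mul_inr, inr_mul_inl, ← inr_sub, hinr, hinl, hinr] at h
  simpa [bimodCommutator] using h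

end LieDerivation

section CornerLeibniz

variable {A X : Type*} [Ring A] [AddCommGroup X] [Module A X] [Module Aᵐᵒᵖ X]
  {p : A} {S : X → X} {LA D ℓ : A → A}

theorem component_smul_of_mem_corner (hp : IsIdempotentElem p)
    (hXp : ∀ x : X, op p • x = 0)
    (hcomp : ∀ a x, S (bimodCommutator a x) = bimodCommutator (LA a) x + bimodCommutator a (S x))
    (hLA : ∀ a, LA a = D a + ℓ a) (hD : ∀ a b, D (a * b) = D a * b + a * D b)
    {y : A} (hy : y ∈ Subsemigroup.corner p) (x : X) :
    S (y • x) = D y • x + bimodCommutator (ℓ y) x + y • S x := by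
  have hyp := ((Subsemigroup.mem_corner_iff hp).mp hy).2
  have h := hcomp y x
  simp only [bimodCommutator, op_smul_eq_zero_of_mul_eq_self hXp hyp, sub_zero, hLA,
    op_add, add_smul, op_smul_map_eq_zero_of_mem_corner hp hXp hD hy, zero_add] at h
  rw [h, bimodCommutator]
  abel

theorem bimodCommutator_mul_of_mem_corner (hp : IsIdempotentElem p)
    (hXp : ∀ x : X, op p • x = 0)
    (hcomp : ∀ a x, S (bimodCommutator a x) = bimodCommutator (LA a) x + bimodCommutator a (S x))
    (hLA : ∀ a, LA a = D a + ℓ a) (hD : ∀ a b, D (a * b) = D a * b + a * D b)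
    {y z : A} (hy : y ∈ Subsemigroup.corner p) (hz : z ∈ Subsemigroup.corner p) (x : X) :
    bimodCommutator (ℓ (y * z)) x =
      bimodCommutator (ℓ y) (z • x) + y • bimodCommutator (ℓ z) x := by
  -- expand `S ((y * z) • x) = S (y • z • x)` in two ways
  have h := component_smul_of_mem_corner hp hXp hcomp hLA hD (mul_mem hy hz) x
  rw [mul_smul, component_smul_of_mem_corner hp hXp hcomp hLA hD hy,
    component_smul_of_mem_corner hp hXp hcomp hLA hD hz, hD] at h
  simp only [add_smul, mul_smul, smul_add] at h
  linear_combination (norm := abel) -h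

end CornerLeibniz

section CornerGoodSet

variable {R A : Type*} (X : Type*) [CommRing R] [Ring A] [Algebra R A] [AddCommGroup X]
  [Module R X] [Module A X] [Module Aᵐᵒᵖ X] {p : A} {ℓA : A →ₗ[R] A}

def cornerGoodSubmodule [IsScalarTower R A X] [IsScalarTower R Aᵐᵒᵖ X] (p : A)
    (ℓA : A →ₗ[R] A) : Submodule R A where
  carrier := cornerGoodSet A X p ℓA
  zero_mem' := ⟨by rw [mul_zero, zero_mul], fun x ↦ by rw [map_zero, zero_smul, op_zero, zero_smul]⟩
  add_mem' := by
    rintro y z ⟨hy, hyX⟩ ⟨hz, hzX⟩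
    refine ⟨by rw [mul_add, add_mul, hy, hz], fun x ↦ ?_⟩
    rw [map_add, add_smul, op_add, add_smul, hyX, hzX]
  smul_mem' := by
    rintro r y ⟨hy, hyX⟩
    refine ⟨by rw [mul_smul_comm, smul_mul_assoc, hy], fun x ↦ ?_⟩
    rw [map_smul, smul_assoc, op_smul, smul_assoc, hyX]

theorem mem_cornerGoodSet_iff (hp : IsIdempotentElem p) {y : A} :
    y ∈ cornerGoodSet A X p ℓA ↔
      y ∈ Subsemigroup.corner p ∧ ∀ x : X, bimodCommutator (ℓA y) x = 0 := by
  simp only [cornerGoodSet, Set.mem_ofPred_eq, Subsemigroup.mem_corner_iff_mul_mul_eq hp,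
    bimodCommutator_eq_zero_iff]

variable {X} {S : X → X} {LA D : A → A}

theorem mul_mem_cornerGoodSet (hp : IsIdempotentElem p) (hXp : ∀ x : X, op p • x = 0)
    (hcomp : ∀ a x, S (bimodCommutator a x) = bimodCommutator (LA a) x + bimodCommutator a (S x))
    (hLA : ∀ a, LA a = D a + ℓA a) (hD : ∀ a b, D (a * b) = D a * b + a * D b) {y z : A}
    (hy : y ∈ cornerGoodSet A X p ℓA) (hz : z ∈ cornerGoodSet A X p ℓA) :
    y * z ∈ cornerGoodSet A X p ℓA := by
  rw [mem_cornerGoodSet_iff X hp] at hy hz ⊢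
  refine ⟨mul_mem hy.1 hz.1, fun x ↦ ?_⟩
  rw [bimodCommutator_mul_of_mem_corner hp hXp hcomp hLA hD hy.1 hz.1, hy.2, hz.2,
    smul_zero, add_zero]

theorem mem_cornerGoodSet_of_isIdempotentElem [SMulCommClass A Aᵐᵒᵖ X]
    (hp : IsIdempotentElem p) (hXp : ∀ x : X, op p • x = 0)
    (hcomp : ∀ a x, S (bimodCommutator a x) = bimodCommutator (LA a) x + bimodCommutator a (S x))
    (hLA : ∀ a, LA a = D a + ℓA a) (hD : ∀ a b, D (a * b) = D a * b + a * D b)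
    {e : A} (hcen : ℓA e ∈ Set.center A) (hpe : p * e * p = e) (he : IsIdempotentElem e) :
    e ∈ cornerGoodSet A X p ℓA := by
  have hcorner : e ∈ Subsemigroup.corner p := ⟨e, hpe⟩
  refine (mem_cornerGoodSet_iff X hp).mpr ⟨hcorner, fun x ↦ he.eq_zero_of_eq_smul_add_smul ?_⟩
  have h := bimodCommutator_mul_of_mem_corner hp hXp hcomp hLA hD hcorner hcorner x
  rwa [he.eq, bimodCommutator_smul_of_mem_center hcen] at h

theorem commutator_mem_cornerGoodSet (hp : IsIdempotentElem p)
    (hcom : ∀ a b : A, ℓA (a * b - b * a) = 0) {y z : A} (hy : y ∈ Subsemigroup.corner p)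
    (hz : z ∈ Subsemigroup.corner p) : y * z - z * y ∈ cornerGoodSet A X p ℓA := by
  refine (mem_cornerGoodSet_iff X hp).mpr ⟨?_, fun x ↦ ?_⟩
  · exact (sub_mem (mul_mem hy hz) (mul_mem hz hy) : y * z - z * y ∈ NonUnitalRing.corner p)
  · rw [hcom, bimodCommutator, zero_smul, op_zero, zero_smul, sub_zero]

end CornerGoodSet

theorem cornerGoodSet_subalgebra_general
    {R A X : Type*} [CommRing R] [Ring A] [Algebra R A]
    [AddCommGroup X] [Module R X] [Module A X] [Module Aᵐᵒᵖ X]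
    [SMulCommClass A Aᵐᵒᵖ X] [IsScalarTower R A X] [IsScalarTower R Aᵐᵒᵖ X]
    (p : A) (hp : p * p = p)
    (hstar : ∀ x : X, op (1 - p) • (p • x) = x)
    (L : TrivSqZeroExt A X →ₗ[R] TrivSqZeroExt A X)
    (hLie : ∀ u v : TrivSqZeroExt A X,
        L (u * v - v * u) = (L u * v - v * L u) + (u * L v - L v * u))
    (LA : A →ₗ[R] A) (T : X →ₗ[R] A) (LX : A →ₗ[R] X) (S : X →ₗ[R] X)
    (hL : ∀ (a : A) (x : X), L (inl a + inr x) = inl (LA a + T x) + inr (LX a + S x))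
    (ℓA : A →ₗ[R] A) (hcen : ∀ a : A, ℓA a ∈ Set.center A)
    (hcom : ∀ a b : A, ℓA (a * b - b * a) = 0)
    (hder : ∀ a b : A, (LA - ℓA) (a * b) = (LA - ℓA) a * b + a * (LA - ℓA) b) :
    (0 : A) ∈ cornerGoodSet A X p ℓA
    ∧ (∀ y z : A, y ∈ cornerGoodSet A X p ℓA → z ∈ cornerGoodSet A X p ℓA →
        y + z ∈ cornerGoodSet A X p ℓA)
    ∧ (∀ (r : R) (y : A), y ∈ cornerGoodSet A X p ℓA →
        r • y ∈ cornerGoodSet A X p ℓA)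
    ∧ (∀ y z : A, y ∈ cornerGoodSet A X p ℓA → z ∈ cornerGoodSet A X p ℓA →
        y * z ∈ cornerGoodSet A X p ℓA)
    ∧ (∀ y : A, p * y * p = y → y * y = y → y ∈ cornerGoodSet A X p ℓA)
    ∧ (∀ a b : A, (p * a * p) * (p * b * p) - (p * b * p) * (p * a * p)
        ∈ cornerGoodSet A X p ℓA) := by
  have hp : IsIdempotentElem p := hp
  have hXp := op_smul_eq_zero_of_forall_peirce hp hstar
  have hcomp := component_map_bimodCommutator hLie hL
  have hLA (a : A) : LA a = (LA - ℓA) a + ℓA a := (sub_add_cancel _ _).symm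
  have hcorner (a : A) : p * a * p ∈ Subsemigroup.corner p := ⟨a, rfl⟩
  let A' := cornerGoodSubmodule X p ℓA
  exact ⟨A'.zero_mem, fun _ _ ↦ A'.add_mem, fun r _ ↦ A'.smul_mem r,
    fun _ _ ↦ mul_mem_cornerGoodSet hp hXp hcomp hLA hder,
    fun _ hpe he ↦ mem_cornerGoodSet_of_isIdempotentElem hp hXp hcomp hLA hder (hcen _) hpe he,
    fun a b ↦ commutator_mem_cornerGoodSet hp hcom (hcorner a) (hcorner b)⟩

/-- Suppose `A ⋉ X` satisfies (★), `L` is a Lie derivation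
on `A ⋉ X` with components `(L_A, T, L_X, S)` and `ℓ_A : A → Z(A)` is a linear
map vanishing on commutators such that `L_A − ℓ_A` is a derivation.  Then the
set `A' = {pap : [ℓ_A(pap), x] = 0 ∀ x ∈ X}` is a subalgebra of the corner
algebra `pAp` (an `R`-submodule closed under multiplication) containing every
idempotent and every commutator of `pAp`. -/
theorem cornerGoodSet_subalgebra
    {R A X : Type*} [CommRing R] [Ring A] [Algebra R A]
    [AddCommGroup X] [Module R X] [Module A X] [Module Aᵐᵒᵖ X]
    [SMulCommClass A Aᵐᵒᵖ X] [IsScalarTower R A X] [IsScalarTower R Aᵐᵒᵖ X]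
    (p : A) (hp : p * p = p) (hp0 : p ≠ 0) (hp1 : p ≠ 1)
    (hstar : ∀ x : X, op (1 - p) • (p • x) = x)
    (L : TrivSqZeroExt A X →ₗ[R] TrivSqZeroExt A X)
    (hLie : ∀ u v : TrivSqZeroExt A X,
        L (u * v - v * u) = (L u * v - v * L u) + (u * L v - L v * u))
    (LA : A →ₗ[R] A) (T : X →ₗ[R] A) (LX : A →ₗ[R] X) (S : X →ₗ[R] X)
    (hL : ∀ (a : A) (x : X), L (inl a + inr x) = inl (LA a + T x) + inr (LX a + S x))
    (ℓA : A →ₗ[R] A) (hcen : ∀ a : A, ℓA a ∈ Set.center A)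
    (hcom : ∀ a b : A, ℓA (a * b - b * a) = 0)
    (hder : ∀ a b : A, (LA - ℓA) (a * b) = (LA - ℓA) a * b + a * (LA - ℓA) b) :
    (0 : A) ∈ cornerGoodSet A X p ℓA
    ∧ (∀ y z : A, y ∈ cornerGoodSet A X p ℓA → z ∈ cornerGoodSet A X p ℓA →
        y + z ∈ cornerGoodSet A X p ℓA)
    ∧ (∀ (r : R) (y : A), y ∈ cornerGoodSet A X p ℓA →
        r • y ∈ cornerGoodSet A X p ℓA)
    ∧ (∀ y z : A, y ∈ cornerGoodSet A X p ℓA → z ∈ cornerGoodSet A X p ℓA →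
        y * z ∈ cornerGoodSet A X p ℓA)
    ∧ (∀ y : A, p * y * p = y → y * y = y → y ∈ cornerGoodSet A X p ℓA)
    ∧ (∀ a b : A, (p * a * p) * (p * b * p) - (p * b * p) * (p * a * p)
        ∈ cornerGoodSet A X p ℓA) :=
  cornerGoodSet_subalgebra_general p hp hstar L hLie LA T LX S hL ℓA hcen hcom hder
end

section
/- Let A and B be unital algebras, X an (A,B)-bimodule, and consider the triangular algebra T = Tri(A,X,B), realized as the trivial extension algebra (A×B)⋉X where X carries the (A×B)-bimodule structure (a,b)·x = a·x and x·(a,b) = x·b. Then for every Lie derivation L on T with components L(c,x) = (L_0(c)+T_0(x), L_X(c)+S(x)) (where c∈A×B, L_0 : A×B → A×B, T_0 : X → A×B), the component T_0 is identically zero. -/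
/-!
Take the idempotent `e = (1, 0)` of `A × B`. It is central in `A × B`, and `[e, x] = e • x - x • e = x`
for every `x ∈ X`. Applying a Lie derivation `L` to `[e, x] = x` and reading off the `A × B`-component,
the term `[L e, x]` contributes nothing (products with `X` land in `X`), so
`T₀ x = [e, T₀ x] = 0` because `e` is central.
-/

open TrivSqZeroExt MulOpposite

section Triangular

variable {R A B X : Type*} [CommRing R] [Ring A] [Ring B] [Algebra R A] [Algebra R B]
  [AddCommGroup X] [Module R X] [Module A X] [Module Bᵐᵒᵖ X]
  [SMulCommClass A Bᵐᵒᵖ X] [IsScalarTower R A X] [IsScalarTower R Bᵐᵒᵖ X]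

noncomputable local instance moduleProdLeft : Module (A × B) X :=
  Module.compHom X (RingHom.fst A B)

noncomputable local instance moduleProdRight : Module (A × B)ᵐᵒᵖ X :=
  Module.compHom X (RingHom.op (RingHom.snd A B))

local instance : SMulCommClass (A × B) (A × B)ᵐᵒᵖ X :=
  ⟨fun c d x => smul_comm (c.1 : A) (op d.unop.2 : Bᵐᵒᵖ) x⟩

theorem TrivSqZeroExt.fst_apply_inr_eq_zero_of_lie {T M : Type*} [Ring T] [AddCommGroup M]
    [Module T M] [Module Tᵐᵒᵖ M] [SMulCommClass T Tᵐᵒᵖ M]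
    (L : TrivSqZeroExt T M → TrivSqZeroExt T M) {e : T} {x : M}
    (hLie : L (inl e * inr x - inr x * inl e) =
      (L (inl e) * inr x - inr x * L (inl e)) + (inl e * L (inr x) - L (inr x) * inl e))
    (hx : e • x - op e • x = x) (he : Commute e (L (inr x)).fst) :
    (L (inr x)).fst = 0 := by
  rw [inl_mul_inr, inr_mul_inl, ← inr_sub, hx] at hLie
  have hfst := congrArg fst hLie
  simp only [fst_add, fst_sub, fst_mul, fst_inl, fst_inr, mul_zero, zero_mul, sub_zero] at hfst
  rwa [he.eq, sub_self, zero_add] at hfst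

theorem Prod.commute_one_zero {S₁ S₂ : Type*} [Semiring S₁] [Semiring S₂] (c : S₁ × S₂) :
    Commute ((1, 0) : S₁ × S₂) c :=
  Prod.ext (Commute.one_left c.1) (Commute.zero_left c.2)

omit [SMulCommClass A Bᵐᵒᵖ X] in
theorem one_zero_smul_sub_op_smul (x : X) :
    ((1, 0) : A × B) • x - op ((1, 0) : A × B) • x = x := by
  change (1 : A) • x - op (0 : B) • x = x
  rw [one_smul, op_zero, zero_smul, sub_zero]

/-- For the triangular algebra `Tri(A, X, B)`, realized as
the trivial extension algebra `(A × B) ⋉ X`, the component `T₀ : X → A × B`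
of any Lie derivation is identically zero. -/
theorem triangular_lieDerivation_component_T_eq_zero
    (L : TrivSqZeroExt (A × B) X →ₗ[R] TrivSqZeroExt (A × B) X)
    (hLie : ∀ u v : TrivSqZeroExt (A × B) X,
        L (u * v - v * u) = (L u * v - v * L u) + (u * L v - L v * u))
    (L0 : (A × B) →ₗ[R] (A × B)) (T0 : X →ₗ[R] (A × B))
    (LX : (A × B) →ₗ[R] X) (S : X →ₗ[R] X)
    (hL : ∀ (c : A × B) (x : X),
        L (inl c + inr x) = inl (L0 c + T0 x) + inr (LX c + S x)) :
    T0 = 0 := by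
  ext x : 1
  have hT0 : T0 x = (L (inr x)).fst := by simpa using (congrArg fst (hL 0 x)).symm
  rw [hT0]
  exact fst_apply_inr_eq_zero_of_lie L (hLie _ _) (one_zero_smul_sub_op_smul x)
    (Prod.commute_one_zero _)

end Triangular
end

section
/- Suppose the trivial extension algebra A⋉X satisfies condition (★) and X is a loyal A-bimodule. Then there exists a unique algebra isomorphism τ : π_{pAp}(Z(A⋉X)) → π_{qAq}(Z(A⋉X)) satisfying (pap)·x = x·τ(pap) for all x∈X and all pap ∈ π_{pAp}(Z(A⋉X)). -/
/-!
A central element `(c, ξ)` of `A ⋉ X` satisfies `c • x = x • c` for all `x ∈ X`; since `X = pXq`,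
this reads `(pcp) • x = x • (qcq)`. By loyalty an element of `pAp` is determined by its left action
on `X` and an element of `qAq` by its right action, so `pcp ↦ qcq` is a well-defined bijection and
the only map with the intertwining property. The relation "`a • x = x • b` for all `x`" respects
sums, scalar multiples and products, and so do the corners, so this map is an algebra isomorphism.
-/

open TrivSqZeroExt MulOpposite

def MemCorner {A : Type*} [Mul A] (e a : A) : Prop := e * a * e = a

namespace MemCorner

variable {A : Type*} [NonUnitalSemiring A] {e a b : A}

theorem add (ha : MemCorner e a) (hb : MemCorner e b) : MemCorner e (a + b) := by
  rw [MemCorner, mul_add, add_mul, ha, hb]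

theorem smul {R : Type*} [SMul R A] [IsScalarTower R A A] [SMulCommClass R A A]
    (ha : MemCorner e a) (r : R) : MemCorner e (r • a) := by
  rw [MemCorner, mul_smul_comm, smul_mul_assoc, ha]

theorem mul (ha : MemCorner e a) (he : IsIdempotentElem e) (hb : MemCorner e b) :
    MemCorner e (a * b) := by
  have hea : e * a = a := by
    conv_lhs => rw [← ha]
    rw [← mul_assoc, ← mul_assoc, he.eq, ha]
  have hbe : b * e = b := by
    conv_lhs => rw [← hb]
    rw [mul_assoc, he.eq, hb]
  calc e * (a * b) * e = (e * a) * (b * e) := by simp only [mul_assoc]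
    _ = a * b := by rw [hea, hbe]

end MemCorner

theorem IsIdempotentElem.memCorner_mul_mul {A : Type*} [Semigroup A] {e : A}
    (he : IsIdempotentElem e) (a : A) : MemCorner e (e * a * e) := by
  rw [MemCorner, mul_assoc, mul_assoc, he.eq, ← mul_assoc, ← mul_assoc, he.eq]

section Bimodule

variable {A X : Type*} [Ring A] [AddCommGroup X] [Module A X] [Module Aᵐᵒᵖ X]

variable (X) in
def Intertwines (a b : A) : Prop := ∀ x : X, a • x = op b • x

namespace Intertwines

variable {a b c d : A}

theorem add (h₁ : Intertwines X a b) (h₂ : Intertwines X c d) :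
    Intertwines X (a + c) (b + d) := fun x => by
  rw [add_smul, op_add, add_smul, h₁, h₂]

theorem smul {R : Type*} [SMul R A] [SMul R X] [IsScalarTower R A X] [IsScalarTower R Aᵐᵒᵖ X]
    (h : Intertwines X a b) (r : R) : Intertwines X (r • a) (r • b) := fun x => by
  rw [smul_assoc, h, op_smul, smul_assoc]

variable [SMulCommClass A Aᵐᵒᵖ X]

theorem mul (h₁ : Intertwines X a b) (h₂ : Intertwines X c d) :
    Intertwines X (a * c) (b * d) := fun x => by
  rw [mul_smul, h₂, smul_comm, h₁, op_mul, mul_smul]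

theorem corner {p q : A} (h : Intertwines X c c) (hp : ∀ x : X, p • x = x)
    (hq : ∀ x : X, op q • x = x) : Intertwines X (p * c * p) (q * c * q) := fun x =>
  calc (p * c * p) • x = p • op c • x := by rw [mul_smul, mul_smul, hp x, h x]
    _ = op c • x := by rw [smul_comm p (op c) x, hp]
    _ = op q • c • x := by rw [← h x, ← smul_comm c (op q) x, hq]
    _ = op (q * c * q) • x := by rw [op_mul, op_mul, mul_smul, mul_smul, hq x, h x]

end Intertwines

theorem Intertwines.left_unique {p a b c : A}
    (hloyal : ∀ a : A, (∀ x : X, a • x = 0) → p * a * p = 0)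
    (ha : MemCorner p a) (hb : MemCorner p b) (h₁ : Intertwines X a c)
    (h₂ : Intertwines X b c) : a = b := by
  have hpab : p * (a - b) * p = 0 := hloyal _ fun x => by rw [sub_smul, h₁, h₂, sub_self]
  rwa [mul_sub, sub_mul, ha, hb, sub_eq_zero] at hpab

theorem Intertwines.right_unique {q a b c : A}
    (hloyal : ∀ a : A, (∀ x : X, op a • x = 0) → q * a * q = 0)
    (ha : MemCorner q a) (hb : MemCorner q b) (h₁ : Intertwines X c a)
    (h₂ : Intertwines X c b) : a = b := by
  have hqab : q * (a - b) * q = 0 := hloyal _ fun x => by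
    rw [op_sub, sub_smul, ← h₁, ← h₂, sub_self]
  rwa [mul_sub, sub_mul, ha, hb, sub_eq_zero] at hqab

theorem TrivSqZeroExt.intertwines_fst_of_mem_center {u : TrivSqZeroExt A X}
    (hu : u ∈ Set.center (TrivSqZeroExt A X)) : Intertwines X u.fst u.fst := fun x => by
  simpa [snd_mul] using congrArg snd (hu.comm (inr x))

theorem op_smul_eq_self_of_op_smul_smul_eq_self {p : A} (hp : IsIdempotentElem p)
    (hstar : ∀ x : X, op (1 - p) • p • x = x) (x : X) : op (1 - p) • x = x := by
  rw [← hstar x, smul_smul, ← op_mul, hp.one_sub.eq]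

variable [SMulCommClass A Aᵐᵒᵖ X] {p : A}

theorem smul_eq_self_of_op_smul_smul_eq_self (hp : IsIdempotentElem p)
    (hstar : ∀ x : X, op (1 - p) • p • x = x) (x : X) : p • x = x := by
  rw [← hstar x, smul_comm, smul_smul, hp.eq]

theorem intertwines_corners_of_mem_center (hp : IsIdempotentElem p)
    (hstar : ∀ x : X, op (1 - p) • p • x = x) {u : TrivSqZeroExt A X}
    (hu : u ∈ Set.center (TrivSqZeroExt A X)) :
    Intertwines X (p * u.fst * p) ((1 - p) * u.fst * (1 - p)) :=
  (intertwines_fst_of_mem_center hu).corner (smul_eq_self_of_op_smul_smul_eq_self hp hstar)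
    (op_smul_eq_self_of_op_smul_smul_eq_self hp hstar)

end Bimodule

theorem loyal_center_corner_isomorphism_general
    {R A X : Type*} [CommRing R] [Ring A] [Algebra R A]
    [AddCommGroup X] [Module R X] [Module A X] [Module Aᵐᵒᵖ X]
    [SMulCommClass A Aᵐᵒᵖ X] [IsScalarTower R A X] [IsScalarTower R Aᵐᵒᵖ X]
    (p : A) (hp : p * p = p)
    (hstar : ∀ x : X, op (1 - p) • (p • x) = x)
    (hloyal_left : ∀ a : A, (∀ x : X, a • x = 0) → p * a * p = 0)
    (hloyal_right : ∀ a : A, (∀ x : X, op a • x = 0) → (1 - p) * a * (1 - p) = 0) :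
    ∃! τ : {y : A // ∃ u ∈ Set.center (TrivSqZeroExt A X), y = p * u.fst * p} →
        {y : A // ∃ u ∈ Set.center (TrivSqZeroExt A X), y = (1 - p) * u.fst * (1 - p)},
      Function.Bijective τ
      ∧ (∀ y z w : {y : A // ∃ u ∈ Set.center (TrivSqZeroExt A X), y = p * u.fst * p},
          (w : A) = (y : A) + (z : A) → ((τ w : A) = (τ y : A) + (τ z : A)))
      ∧ (∀ (r : R) (y w : {y : A // ∃ u ∈ Set.center (TrivSqZeroExt A X), y = p * u.fst * p}),
          (w : A) = r • (y : A) → ((τ w : A) = r • (τ y : A)))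
      ∧ (∀ y z w : {y : A // ∃ u ∈ Set.center (TrivSqZeroExt A X), y = p * u.fst * p},
          (w : A) = (y : A) * (z : A) → ((τ w : A) = (τ y : A) * (τ z : A)))
      ∧ (∀ (y : {y : A // ∃ u ∈ Set.center (TrivSqZeroExt A X), y = p * u.fst * p})
          (x : X), (y : A) • x = op ((τ y : A)) • x) := by
  have hq : IsIdempotentElem (1 - p) := IsIdempotentElem.one_sub hp
  have hτ : ∀ y : {y : A // ∃ u ∈ Set.center (TrivSqZeroExt A X), y = p * u.fst * p},
      ∃ z : {y : A // ∃ u ∈ Set.center (TrivSqZeroExt A X), y = (1 - p) * u.fst * (1 - p)},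
        Intertwines X (y : A) (z : A) := by
    rintro ⟨_, u, hu, rfl⟩
    exact ⟨⟨_, u, hu, rfl⟩, intertwines_corners_of_mem_center hp hstar hu⟩
  choose τ hτ using hτ
  have memQ
      (z : {y : A // ∃ u ∈ Set.center (TrivSqZeroExt A X), y = (1 - p) * u.fst * (1 - p)}) :
      MemCorner (1 - p) z := by
    obtain ⟨_, _, _, rfl⟩ := z
    exact hq.memCorner_mul_mul _
  have eq_τ (y : {y : A // ∃ u ∈ Set.center (TrivSqZeroExt A X), y = p * u.fst * p}) (z : A)
      (hz : MemCorner (1 - p) z) (h : Intertwines X (y : A) z) : (τ y : A) = z :=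
    (hτ y).right_unique hloyal_right (memQ _) hz h
  refine ⟨τ, ⟨⟨fun y y' h => ?_, fun z => ?_⟩, fun y z w hw => ?_,
    fun r y w hw => ?_, fun y z w hw => ?_, hτ⟩, fun τ' h => ?_⟩
  · obtain ⟨u, -, hy⟩ := y.2
    obtain ⟨u', -, hy'⟩ := y'.2
    exact Subtype.ext <| (hτ y).left_unique hloyal_left
      (hy ▸ IsIdempotentElem.memCorner_mul_mul hp _)
      (hy' ▸ IsIdempotentElem.memCorner_mul_mul hp _) (by rw [h]; exact hτ y')
  · obtain ⟨_, u, hu, rfl⟩ := z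
    exact ⟨⟨_, u, hu, rfl⟩, Subtype.ext <|
      eq_τ _ _ (memQ _) (intertwines_corners_of_mem_center hp hstar hu)⟩
  · exact eq_τ w _ ((memQ _).add (memQ _)) (hw ▸ (hτ y).add (hτ z))
  · exact eq_τ w _ ((memQ _).smul r) (hw ▸ (hτ y).smul r)
  · exact eq_τ w _ ((memQ _).mul hq (memQ _)) (hw ▸ (hτ y).mul (hτ z))
  · exact funext fun y => Subtype.ext (eq_τ y _ (memQ _) (h.2.2.2.2 y)).symm

/-- Suppose the trivial extension algebra `A ⋉ X` satisfies
condition (★) and `X` is a loyal `A`-bimodule.  Then there exists a unique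
algebra isomorphism `τ : π_{pAp}(Z(A ⋉ X)) → π_{qAq}(Z(A ⋉ X))` (a bijection
preserving sums, scalar multiples and products) such that
`(pap) • x = x • τ(pap)` for all `x ∈ X`. -/
theorem loyal_center_corner_isomorphism
    {R A X : Type*} [CommRing R] [Ring A] [Algebra R A]
    [AddCommGroup X] [Module R X] [Module A X] [Module Aᵐᵒᵖ X]
    [SMulCommClass A Aᵐᵒᵖ X] [IsScalarTower R A X] [IsScalarTower R Aᵐᵒᵖ X]
    (p : A) (hp : p * p = p) (hp0 : p ≠ 0) (hp1 : p ≠ 1)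
    (hstar : ∀ x : X, op (1 - p) • (p • x) = x)
    (hloyal_left : ∀ a : A, (∀ x : X, a • x = 0) → p * a * p = 0)
    (hloyal_right : ∀ a : A, (∀ x : X, op a • x = 0) → (1 - p) * a * (1 - p) = 0) :
    ∃! τ : {y : A // ∃ u ∈ Set.center (TrivSqZeroExt A X), y = p * u.fst * p} →
        {y : A // ∃ u ∈ Set.center (TrivSqZeroExt A X), y = (1 - p) * u.fst * (1 - p)},
      Function.Bijective τ
      ∧ (∀ y z w : {y : A // ∃ u ∈ Set.center (TrivSqZeroExt A X), y = p * u.fst * p},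
          (w : A) = (y : A) + (z : A) → ((τ w : A) = (τ y : A) + (τ z : A)))
      ∧ (∀ (r : R) (y w : {y : A // ∃ u ∈ Set.center (TrivSqZeroExt A X), y = p * u.fst * p}),
          (w : A) = r • (y : A) → ((τ w : A) = r • (τ y : A)))
      ∧ (∀ y z w : {y : A // ∃ u ∈ Set.center (TrivSqZeroExt A X), y = p * u.fst * p},
          (w : A) = (y : A) * (z : A) → ((τ w : A) = (τ y : A) * (τ z : A)))
      ∧ (∀ (y : {y : A // ∃ u ∈ Set.center (TrivSqZeroExt A X), y = p * u.fst * p})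
          (x : X), (y : A) • x = op ((τ y : A)) • x) :=
  loyal_center_corner_isomorphism_general p hp hstar hloyal_left hloyal_right
end
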